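/- arXiv:1412.5469 — 4 statements merged into one kernel-verified Lean document; each statement's English description precedes it below -/
import Mathlib

section
/- Let G be a finite E_𝔘-group, D = G^𝔘 its supersoluble residual, and H a subgroup of G with D ∩ H = 1 and DH = G. If H is nilpotent, then H is self-normalizing in G (i.e. N_G(H) = H), so H is a Carter subgroup of G. -/
open Subgroup

/-- A finite group is *supersolvable* if it has a chain of subgroups
`⊥ = G_0 ≤ G_1 ≤ ⋯ ≤ G_n = ⊤`, each normal in `G`, with each successive quotient cyclic. -/
def IsSupersolvableGroup (G : Type*) [Group G] : Prop :=
  ∃ (n : ℕ) (c : Fin (n + 1) → Subgroup G) (_ : ∀ i, (c i).Normal),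
    Monotone c ∧ c 0 = ⊥ ∧ c (Fin.last n) = ⊤ ∧
    ∀ i : Fin n,
      IsCyclic (↥(c i.succ) ⧸ ((c i.castSucc).subgroupOf (c i.succ)))

/-- `K` is a maximal subgroup of `L` (both viewed as subgroups of an ambient group). -/
def IsMaximalSubgroupOf {G : Type*} [Group G] (K L : Subgroup G) : Prop :=
  K < L ∧ ∀ X : Subgroup G, K ≤ X → X ≤ L → X = K ∨ X = L

/-- `H` is 𝔘-subnormal in `G`. -/
def USubnormal {G : Type*} [Group G] (H : Subgroup G) : Prop :=
  H ≠ ⊤ ∧ ∃ (n : ℕ) (c : Fin (n + 1) → Subgroup G),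
    c 0 = H ∧ c (Fin.last n) = ⊤ ∧
    ∀ i : Fin n, IsMaximalSubgroupOf (c i.castSucc) (c i.succ) ∧
      IsSupersolvableGroup
        (↥(c i.succ) ⧸ ((c i.castSucc).subgroupOf (c i.succ)).normalCore)

/-- `H` is 𝔘-abnormal in `G`. -/
def UAbnormal {G : Type*} [Group G] (H : Subgroup G) : Prop :=
  ∀ K L : Subgroup G, H ≤ K → IsMaximalSubgroupOf K L →
    ¬ IsSupersolvableGroup (↥L ⧸ (K.subgroupOf L).normalCore)

/-- `G` is an `E_𝔘`-group. -/
def IsEUGroup (G : Type*) [Group G] : Prop :=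
  ¬ IsSupersolvableGroup G ∧ ∀ H : Subgroup G, H ≠ ⊥ → USubnormal H ∨ UAbnormal H

/-- The supersoluble residual `G^𝔘`. -/
def uResidual (G : Type*) [Group G] : Subgroup G :=
  sInf {N : Subgroup G | ∃ h : N.Normal, letI := h; IsSupersolvableGroup (G ⧸ N)}

instance uResidual_normal (G : Type*) [Group G] : (uResidual G).Normal := by
  constructor
  intro n hn g
  rw [uResidual, Subgroup.mem_sInf] at hn ⊢
  rintro N hN
  obtain ⟨h1, h2⟩ := hN
  exact h1.conj_mem n (hn N ⟨h1, h2⟩) g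

/-- Hall subgroup. -/
def IsHallSubgroup {G : Type*} [Group G] (H : Subgroup G) : Prop :=
  Nat.Coprime (Nat.card H) H.index

/-- Gaschütz subgroup. -/
def IsGaschuetzSubgroup {G : Type*} [Group G] (H : Subgroup G) : Prop :=
  IsSupersolvableGroup ↥H ∧
    ∀ K L : Subgroup G, H ≤ K → K ≤ L → ¬ (K.relIndex L).Prime

/-- ℙ-subnormal subgroup. -/
def PSubnormal {G : Type*} [Group G] (H : Subgroup G) : Prop :=
  H ≠ ⊤ ∧ ∃ (n : ℕ) (c : Fin (n + 1) → Subgroup G),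
    c 0 = H ∧ c (Fin.last n) = ⊤ ∧
    ∀ i : Fin n, c i.castSucc < c i.succ ∧ ((c i.castSucc).relIndex (c i.succ)).Prime

/-- ℙ-abnormal subgroup. -/
def PAbnormal {G : Type*} [Group G] (H : Subgroup G) : Prop :=
  ∀ K L : Subgroup G, H ≤ K → K ≤ L → ¬ (K.relIndex L).Prime

/-- A Miller–Moreno group: non-abelian, all proper subgroups abelian. -/
def IsMillerMoreno (X : Type*) [Group X] : Prop :=
  (¬ ∀ a b : X, a * b = b * a) ∧ ∀ H : Subgroup X, H ≠ ⊤ → ∀ a b : ↥H, a * b = b * a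

/-- Abelian group of prime power order. -/
def IsAbelianOfPrimePowerOrder (X : Type*) [Group X] : Prop :=
  (∀ a b : X, a * b = b * a) ∧ ∃ p k : ℕ, Nat.Prime p ∧ Nat.card X = p ^ k

/-- Minimal normal subgroup. -/
def IsMinimalNormalSubgroup {G : Type*} [Group G] (N : Subgroup G) : Prop :=
  N ≠ ⊥ ∧ N.Normal ∧ ∀ X : Subgroup G, X.Normal → X ≠ ⊥ → X ≤ N → X = N

/-- Every chief factor of `G` below `D` is non-cyclic. -/
def ChiefFactorsBelowNoncyclic {G : Type*} [Group G] (D : Subgroup G) : Prop :=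
  ∀ (L K : Subgroup G) [L.Normal] [K.Normal], L ≤ K → K ≤ D →
    IsMinimalNormalSubgroup (K.map (QuotientGroup.mk' L)) →
    ¬ IsCyclic ↥(K.map (QuotientGroup.mk' L))

instance phiIntNormal (G : Type*) [Group G] : (frattini G ⊓ uResidual G).Normal := by
  constructor
  intro n hn g
  rw [Subgroup.mem_inf] at hn ⊢
  exact ⟨(Subgroup.normal_of_characteristic (frattini G)).conj_mem n hn.1 g,
    (uResidual_normal G).conj_mem n hn.2 g⟩

/-- The Fitting subgroup: generated by all nilpotent normal subgroups. -/
def fittingSubgroup (G : Type*) [Group G] : Subgroup G :=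
  sSup {N : Subgroup G | N.Normal ∧ Group.IsNilpotent ↥N}


lemma aux_eq_of_le_card {G : Type*} [Group G] [Finite G] {H K : Subgroup G} (h : H ≤ K)
    (hc : Nat.card K ≤ Nat.card H) : H = K := by
  apply SetLike.coe_injective
  apply Set.eq_of_subset_of_ncard_le h
  rwa [← Nat.card_coe_set_eq, ← Nat.card_coe_set_eq]

lemma aux_supersolvable_of_isCyclic {G : Type*} [Group G] (h : IsCyclic G) :
    IsSupersolvableGroup G := by
  refine ⟨1, ![⊥, ⊤],
    fun i => by
      fin_cases i
      · exact inferInstanceAs (⊥ : Subgroup G).Normal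
      · exact inferInstanceAs (⊤ : Subgroup G).Normal, ?_, rfl, rfl, fun i => ?_⟩
  · intro i j hij
    fin_cases i <;> fin_cases j
    · exact le_rfl
    · exact bot_le
    · simp at hij
    · exact le_rfl
  · fin_cases i
    show IsCyclic (↥(⊤ : Subgroup G) ⧸ ((⊥ : Subgroup G).subgroupOf ⊤))
    haveI : IsCyclic (⊤ : Subgroup G) :=
      isCyclic_of_surjective Subgroup.topEquiv.symm Subgroup.topEquiv.symm.surjective
    exact isCyclic_of_surjective (QuotientGroup.mk' _) (QuotientGroup.mk'_surjective _)

lemma aux_supersolvable_congr {G G' : Type*} [Group G] [Group G'] (e : G ≃* G')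
    (h : IsSupersolvableGroup G) : IsSupersolvableGroup G' := by
  obtain ⟨n, c, hn, hmono, h0, hlast, hcyc⟩ := h
  haveI := hn
  refine ⟨n, fun i => (c i).map e.toMonoidHom, fun i => (hn i).map _ e.surjective,
    fun i j hij => Subgroup.map_mono (hmono hij), by simp [h0],
    by simp only [hlast]; exact Subgroup.map_top_of_surjective _ e.surjective, fun i => ?_⟩
  letI E : ↥(c i.succ) ≃* ↥((c i.succ).map e.toMonoidHom) := MulEquiv.subgroupMap e (c i.succ)
  have hle : c i.castSucc ≤ c i.succ := hmono (Fin.castSucc_le_succ i)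
  have hmap : ((c i.castSucc).subgroupOf (c i.succ)).map E.toMonoidHom
      = ((c i.castSucc).map e.toMonoidHom).subgroupOf ((c i.succ).map e.toMonoidHom) := by
    ext x
    simp only [Subgroup.mem_map, Subgroup.mem_subgroupOf]
    constructor
    · rintro ⟨y, hy, rfl⟩
      exact ⟨↑y, hy, rfl⟩
    · rintro ⟨z, hz, hzx⟩
      exact ⟨⟨z, hle hz⟩, hz, by apply Subtype.ext; exact hzx⟩
  haveI : (((c i.castSucc).map e.toMonoidHom).subgroupOf ((c i.succ).map e.toMonoidHom)).Normal := by
    haveI : ((c i.castSucc).map e.toMonoidHom).Normal := (hn _).map _ e.surjective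
    infer_instance
  exact isCyclic_of_surjective (QuotientGroup.congr _ _ E hmap)
    (QuotientGroup.congr _ _ E hmap).surjective

set_option maxHeartbeats 1000000 in
lemma aux_uResidual_le {G : Type*} [Group G] (K L : Subgroup G) (hL : L = ⊤)
    (hs : IsSupersolvableGroup (↥L ⧸ ((K.subgroupOf L).normalCore))) :
    uResidual G ≤ K := by
  subst hL
  have heq : (Subgroup.topEquiv (G := G)).toMonoidHom = (⊤ : Subgroup G).subtype := rfl
  let C := (K.subgroupOf (⊤ : Subgroup G)).normalCore
  let N : Subgroup G := C.map (⊤ : Subgroup G).subtype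
  have hNn : N.Normal := by
    constructor
    rintro a ha g
    obtain ⟨y, hy, rfl⟩ := ha
    refine ⟨⟨g, mem_top g⟩ * y * ⟨g, mem_top g⟩⁻¹, (normalCore_normal _).conj_mem y hy _, rfl⟩
  have hmap : Subgroup.map (Subgroup.topEquiv (G := G)).toMonoidHom C = N := by rw [heq]
  haveI := hNn
  have e' : (↥(⊤ : Subgroup G) ⧸ C) ≃* G ⧸ N := QuotientGroup.congr C N Subgroup.topEquiv hmap
  have hsup : IsSupersolvableGroup (G ⧸ N) := aux_supersolvable_congr e' hs
  have hmem : N ∈ {N : Subgroup G | ∃ h : N.Normal, letI := h; IsSupersolvableGroup (G ⧸ N)} :=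
    ⟨hNn, hsup⟩
  refine le_trans (sInf_le hmem) ?_
  rintro z ⟨y, hy, rfl⟩
  exact mem_subgroupOf.mp (normalCore_le _ hy)

lemma aux_usubnormal_bound {G : Type*} [Group G] {S : Subgroup G} (h : USubnormal S) :
    ∃ K : Subgroup G, S ≤ K ∧ K ≠ ⊤ ∧ uResidual G ≤ K := by
  obtain ⟨hne, n, c, h0, hlast, hstep⟩ := h
  cases n with
  | zero => exact absurd (h0.symm.trans (by simpa using hlast)) hne
  | succ m =>
    set i : Fin (m + 1) := Fin.last m with hi
    have hsucc : i.succ = Fin.last (m + 1) := Fin.succ_last m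
    obtain ⟨hmax, hsup⟩ := hstep i
    rw [hsucc, hlast] at hmax
    have hLtop : c i.succ = ⊤ := by rw [hsucc, hlast]
    refine ⟨c i.castSucc, ?_, ne_of_lt hmax.1, aux_uResidual_le _ _ hLtop hsup⟩
    have hsm : StrictMono c := Fin.strictMono_iff_lt_succ.mpr (fun j => (hstep j).1.1)
    exact h0 ▸ hsm.monotone (Fin.zero_le _)

lemma aux_maximal_exists {G : Type*} [Group G] [Finite G] {H L : Subgroup G} (h : H < L) :
    ∃ K, H ≤ K ∧ IsMaximalSubgroupOf K L := by
  have hfin : ({X : Subgroup G | H ≤ X ∧ X < L}).Finite := Set.toFinite _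
  obtain ⟨K, hKs, hmax⟩ := Set.Finite.exists_maximalFor id _ hfin ⟨H, le_rfl, h⟩
  refine ⟨K, hKs.1, hKs.2, fun X hKX hXL => ?_⟩
  by_cases hX : X = L
  · right; exact hX
  · left; exact le_antisymm (hmax ⟨hKs.1.trans hKX, lt_of_le_of_ne hXL hX⟩ hKX) hKX

lemma aux_uabnormal_selfnorm {G : Type*} [Group G] [Finite G] (H : Subgroup G)
    (h : UAbnormal H) : Subgroup.normalizer (H : Set G) = H := by
  by_contra hne
  have hlt : H < Subgroup.normalizer (H : Set G) := lt_of_le_of_ne le_normalizer (fun e => hne e.symm)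
  obtain ⟨x, hxN, hxH⟩ := SetLike.exists_of_lt hlt
  set L := H ⊔ zpowers x with hLdef
  have hHL : H ≤ L := le_sup_left
  have hxL : x ∈ L := (le_sup_right : zpowers x ≤ L) (mem_zpowers x)
  have hLn : L ≤ Subgroup.normalizer (H : Set G) := sup_le le_normalizer (by rwa [zpowers_le])
  have hHLlt : H < L := lt_of_le_of_ne hHL (fun e => hxH (e ▸ hxL))
  obtain ⟨K, hHK, hKmax⟩ := aux_maximal_exists hHLlt
  haveI hnormal : (H.subgroupOf L).Normal := by
    constructor
    rintro ⟨a, haL⟩ ha ⟨g, hgL⟩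
    rw [mem_subgroupOf] at ha ⊢
    exact ((Subgroup.mem_normalizer_iff.mp (hLn hgL)) a).mp ha
  have hcore : H.subgroupOf L ≤ (K.subgroupOf L).normalCore := by
    rw [normal_le_normalCore]
    exact fun y hy => mem_subgroupOf.mpr (hHK (mem_subgroupOf.mp hy))
  set C := (K.subgroupOf L).normalCore with hCdef
  set g0 : ↥L ⧸ C := QuotientGroup.mk ⟨x, hxL⟩ with hg0
  have key : L ≤ Subgroup.map L.subtype ((Subgroup.zpowers g0).comap (QuotientGroup.mk' C)) := by
    refine sup_le ?_ ?_
    · intro a ha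
      refine ⟨⟨a, hHL ha⟩, ?_, rfl⟩
      have : (⟨a, hHL ha⟩ : ↥L) ∈ C := hcore (mem_subgroupOf.mpr ha)
      show QuotientGroup.mk (⟨a, hHL ha⟩ : ↥L) ∈ zpowers g0
      rw [(QuotientGroup.eq_one_iff _).mpr this]
      exact one_mem _
    · rw [zpowers_le]
      exact ⟨⟨x, hxL⟩, mem_zpowers g0, rfl⟩
  have hcyc : IsCyclic (↥L ⧸ C) := by
    constructor
    refine ⟨g0, fun y => ?_⟩
    obtain ⟨l, rfl⟩ := QuotientGroup.mk_surjective y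
    obtain ⟨m, hm, hml⟩ := key l.2
    have : m = l := Subtype.ext hml
    subst this
    obtain ⟨k, hk⟩ := mem_zpowers_iff.mp hm
    exact ⟨k, hk⟩
  exact h K L hHK hKmax (aux_supersolvable_of_isCyclic hcyc)

lemma aux_arith {np nq p q m : ℕ} (hp : 2 ≤ p) (hq : 2 ≤ q) (hnp : np * p = m)
    (hnq : nq * q = m) (hm : m ≠ 0)
    (hle : np * (p - 1) + nq * (q - 1) + 1 ≤ m) : False := by
  obtain ⟨a, rfl⟩ : ∃ a, p = a + 1 := ⟨p - 1, by omega⟩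
  obtain ⟨b, rfl⟩ : ∃ b, q = b + 1 := ⟨q - 1, by omega⟩
  simp only [Nat.add_sub_cancel] at hle
  have ha : 0 < a := by omega
  have hb : 0 < b := by omega
  have hnp1 : 0 < np := by
    rcases Nat.eq_zero_or_pos np with h | h
    · subst h; simp at hnp; omega
    · exact h
  have hnq1 : 0 < nq := by
    rcases Nat.eq_zero_or_pos nq with h | h
    · subst h; simp at hnq; omega
    · exact h
  rw [mul_add_one] at hnp hnq
  have h1 : np ≤ np * a := Nat.le_mul_of_pos_right np ha
  have h2 : nq ≤ nq * b := Nat.le_mul_of_pos_right nq hb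
  omega

lemma aux_counting {X : Type*} [Group X] [Finite X]
    (hsimp : ∀ N : Subgroup X, N.Normal → N = ⊥ ∨ N = ⊤)
    (hprop : ∀ S : Subgroup X, S ≠ ⊤ → Nat.card S = 1 ∨ (Nat.card S).Prime)
    (h1 : Nat.card X ≠ 1) (hnpr : ¬(Nat.card X).Prime) : False := by
  have hm0 : Nat.card X ≠ 0 := Nat.card_pos.ne'
  haveI : Nontrivial X := by
    rcases subsingleton_or_nontrivial X with h | h
    · exact absurd (Nat.card_eq_one_iff_unique.mpr ⟨h, inferInstance⟩) h1
    · exact h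
  -- center is trivial
  have hcen : Subgroup.center X = ⊥ := by
    rcases hsimp (Subgroup.center X) inferInstance with h | h
    · exact h
    · exfalso
      have hcomm : ∀ a b : X, a * b = b * a := by
        intro a b
        have : a ∈ Subgroup.center X := h ▸ mem_top a
        exact (Subgroup.mem_center_iff.mp this b).symm
      haveI : Fact (Nat.card X).minFac.Prime := ⟨Nat.minFac_prime h1⟩
      haveI := Fintype.ofFinite X
      have hdvd : (Nat.card X).minFac ∣ Fintype.card X :=
        Nat.card_eq_fintype_card (α := X) ▸ Nat.minFac_dvd (Nat.card X)
      obtain ⟨x, hx⟩ := exists_prime_orderOf_dvd_card (Nat.card X).minFac hdvd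
      have hz : (zpowers x).Normal := by
        constructor
        intro n hn g
        rw [hcomm g n, mul_assoc, mul_inv_cancel, mul_one]
        exact hn
      rcases hsimp _ hz with hb | ht
      · have hx1 : x ∈ (⊥ : Subgroup X) := hb ▸ mem_zpowers x
        rw [Subgroup.mem_bot] at hx1
        rw [hx1, orderOf_one] at hx
        exact (Nat.minFac_prime h1).one_lt.ne' hx.symm
      · have hcard : orderOf x = Nat.card X := by rw [← Nat.card_zpowers, ht, Subgroup.card_top]
        exact hnpr (hcard ▸ hx ▸ (Nat.minFac_prime h1))
  -- not a prime power
  have hpow : ∀ (p k : ℕ), p.Prime → Nat.card X ≠ p ^ k := by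
    intro p k hp hcard
    haveI : Fact p.Prime := ⟨hp⟩
    have hPG : IsPGroup p X := IsPGroup.of_card hcard
    haveI := hPG.center_nontrivial
    exact ((Subgroup.nontrivial_iff_ne_bot (Subgroup.center X)).mp inferInstance) hcen
  -- two distinct primes dividing the order
  set m := Nat.card X with hm
  have hp : m.minFac.Prime := Nat.minFac_prime h1
  set p := m.minFac with hpdef
  set t := m / p ^ m.factorization p with htdef
  have hts : t ∣ m := Nat.ordCompl_dvd m p
  have ht1 : t ≠ 1 := by
    intro h
    have h2 := Nat.ordProj_mul_ordCompl_eq_self m p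
    rw [← htdef, h, mul_one] at h2
    exact hpow p _ hp h2.symm
  have hq : t.minFac.Prime := Nat.minFac_prime ht1
  set q := t.minFac with hqdef
  have hqd : q ∣ m := (Nat.minFac_dvd t).trans hts
  have hpq : p ≠ q := by
    intro h
    apply Nat.not_dvd_ordCompl hp hm0
    show p ∣ t
    rw [h]
    exact Nat.minFac_dvd t
  have hpd : p ∣ m := Nat.minFac_dvd m
  -- key facts about Sylow subgroups for each prime divisor
  have key : ∀ r : ℕ, r.Prime → r ∣ m →
      (∀ P : Sylow r X, Nat.card (P : Subgroup X) = r) ∧ Nat.card (Sylow r X) * r = m := by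
    intro r hr hrd
    haveI : Fact r.Prime := ⟨hr⟩
    have hf : 0 < m.factorization r := hr.factorization_pos_of_dvd hm0 hrd
    have hcards : ∀ P : Sylow r X, Nat.card (P : Subgroup X) = r := by
      intro P
      have hc := Sylow.card_eq_multiplicity P
      have hPt : (P : Subgroup X) ≠ ⊤ := by
        intro h
        rw [h, Subgroup.card_top] at hc
        exact hpow r _ hr hc
      rcases hprop _ hPt with h | h
      · exfalso
        have h3 : r ∣ Nat.card (P : Subgroup X) := by
          rw [hc]; exact dvd_pow_self r hf.ne'
        rw [h] at h3
        have := Nat.le_of_dvd one_pos h3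
        have := hr.one_lt
        omega
      · have hrdvd : r ∣ Nat.card (P : Subgroup X) := by
          rw [hc]; exact dvd_pow_self r hf.ne'
        exact ((Nat.prime_dvd_prime_iff_eq hr h).mp hrdvd).symm
    have hnorms : ∀ P : Sylow r X, Subgroup.normalizer ((P : Subgroup X) : Set X) = P := by
      intro P
      rcases eq_or_ne (Subgroup.normalizer ((P : Subgroup X) : Set X)) ⊤ with h | h
      · exfalso
        haveI hn : (P : Subgroup X).Normal := Subgroup.normalizer_eq_top_iff.mp h
        rcases hsimp _ hn with hb | ht
        · have h3 := hcards P
          rw [hb, Subgroup.card_bot] at h3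
          exact hr.one_lt.ne h3
        · refine hpow r 1 hr ?_
          show Nat.card X = r ^ 1
          rw [pow_one, ← Subgroup.card_top (G := X), ← ht]
          exact hcards P
      · have hle := Subgroup.le_normalizer (H := (P : Subgroup X))
        have hdvd : Nat.card (P : Subgroup X) ∣ Nat.card (Subgroup.normalizer ((P : Subgroup X) : Set X)) :=
          Subgroup.card_dvd_of_le hle
        rcases hprop _ h with h1' | h1'
        · rw [h1', hcards P] at hdvd
          have h5 := Nat.le_of_dvd one_pos hdvd
          have h6 := hr.one_lt
          omega
        · rw [hcards P] at hdvd
          have heq := (Nat.prime_dvd_prime_iff_eq hr h1').mp hdvd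
          exact (aux_eq_of_le_card hle (by rw [hcards P, ← heq])).symm
    refine ⟨hcards, ?_⟩
    obtain ⟨P⟩ : Nonempty (Sylow r X) := inferInstance
    have h2 : Nat.card (Sylow r X) = (P : Subgroup X).index := by
      rw [Sylow.card_eq_card_quotient_normalizer P,
        show Subgroup.normalizer (P : Set X) = P from hnorms P]
      rfl
    have h3 := Subgroup.index_mul_card (P : Subgroup X)
    rw [hcards P] at h3
    rw [h2]
    exact h3
  -- counting elements of prime order
  haveI := Fintype.ofFinite X
  classical
  have count : ∀ r : ℕ, r.Prime → r ∣ m →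
      Nat.card (Sylow r X) * (r - 1) ≤
        (Finset.univ.filter (fun x : X => orderOf x = r)).card := by
    intro r hr hrd
    haveI : Fact r.Prime := ⟨hr⟩
    haveI : Fintype (Sylow r X) := Fintype.ofFinite _
    obtain ⟨hcards, -⟩ := key r hr hrd
    set B : Finset X :=
      Finset.univ.biUnion
        (fun P : Sylow r X => (((P : Subgroup X) : Set X).toFinset.erase 1)) with hB
    have horder : ∀ (P : Sylow r X) (x : X),
        x ∈ (((P : Subgroup X) : Set X).toFinset.erase 1) → orderOf x = r := by
      intro P x hx
      obtain ⟨hx1, hxP⟩ := Finset.mem_erase.mp hx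
      rw [Set.mem_toFinset] at hxP
      have hdvd : orderOf x ∣ r := by
        rw [← hcards P]
        exact Subgroup.orderOf_dvd_natCard _ hxP
      rcases (Nat.dvd_prime hr).mp hdvd with h | h
      · exact absurd (orderOf_eq_one_iff.mp h) hx1
      · exact h
    have hzp : ∀ (P : Sylow r X) (x : X),
        x ∈ (((P : Subgroup X) : Set X).toFinset.erase 1) → zpowers x = (P : Subgroup X) := by
      intro P x hx
      obtain ⟨hx1, hxP⟩ := Finset.mem_erase.mp hx
      rw [Set.mem_toFinset] at hxP
      refine aux_eq_of_le_card (Subgroup.zpowers_le.mpr hxP) ?_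
      rw [hcards P, Nat.card_zpowers, horder P x hx]
    have hdisj : ∀ P ∈ (Finset.univ : Finset (Sylow r X)), ∀ Q ∈ Finset.univ, P ≠ Q →
        Disjoint (((P : Subgroup X) : Set X).toFinset.erase 1)
          (((Q : Subgroup X) : Set X).toFinset.erase 1) := by
      intro P _ Q _ hPQ
      rw [Finset.disjoint_left]
      intro x hxP hxQ
      exact hPQ (Sylow.ext ((hzp P x hxP).symm.trans (hzp Q x hxQ)))
    have hcardB : B.card = Nat.card (Sylow r X) * (r - 1) := by
      rw [hB, Finset.card_biUnion hdisj]
      have hone : ∀ P : Sylow r X,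
          (((P : Subgroup X) : Set X).toFinset.erase 1).card = r - 1 := by
        intro P
        rw [Finset.card_erase_of_mem (by rw [Set.mem_toFinset]; exact (P : Subgroup X).one_mem)]
        rw [Set.toFinset_card]
        have : Fintype.card ((P : Subgroup X) : Set X) = Nat.card (P : Subgroup X) := by
          rw [Nat.card_eq_fintype_card]
          rfl
        rw [this, hcards P]
      rw [Finset.sum_congr rfl (fun P _ => hone P), Finset.sum_const, Finset.card_univ,
        smul_eq_mul, Nat.card_eq_fintype_card]
    have hsubB : B ⊆ Finset.univ.filter (fun x : X => orderOf x = r) := by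
      intro x hx
      rw [hB, Finset.mem_biUnion] at hx
      obtain ⟨P, -, hxP⟩ := hx
      exact Finset.mem_filter.mpr ⟨Finset.mem_univ x, horder P x hxP⟩
    rw [← hcardB]
    exact Finset.card_le_card hsubB
  -- assemble the contradiction
  obtain ⟨-, hnp⟩ := key p hp hpd
  obtain ⟨-, hnq⟩ := key q hq hqd
  set Ep := Finset.univ.filter (fun x : X => orderOf x = p) with hEp
  set Eq' := Finset.univ.filter (fun x : X => orderOf x = q) with hEq
  have hcp := count p hp hpd
  have hcq := count q hq hqd
  have hdisj1 : Disjoint Ep Eq' := by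
    rw [Finset.disjoint_left]
    intro x hx1 hx2
    rw [hEp, Finset.mem_filter] at hx1
    rw [hEq, Finset.mem_filter] at hx2
    exact hpq (hx1.2 ▸ hx2.2 ▸ rfl)
  have hdisj2 : Disjoint (Ep ∪ Eq') ({1} : Finset X) := by
    rw [Finset.disjoint_right]
    intro x hx1 hx2
    rw [Finset.mem_singleton] at hx1
    rcases Finset.mem_union.mp hx2 with h | h
    · rw [hEp, Finset.mem_filter] at h
      rw [hx1, orderOf_one] at h
      exact hp.one_lt.ne h.2
    · rw [hEq, Finset.mem_filter] at h
      rw [hx1, orderOf_one] at h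
      exact hq.one_lt.ne h.2
  have htot : Ep.card + Eq'.card + 1 ≤ m := by
    have h4 : (Ep ∪ Eq' ∪ {1}).card ≤ (Finset.univ : Finset X).card :=
      Finset.card_le_card (Finset.subset_univ _)
    rw [Finset.card_union_of_disjoint hdisj2, Finset.card_union_of_disjoint hdisj1,
      Finset.card_singleton, Finset.card_univ, ← Nat.card_eq_fintype_card] at h4
    exact h4
  exact aux_arith hp.two_le hq.two_le hnp hnq hm0
    (le_trans (by gcongr <;> omega) htot)

lemma aux_norm_map_le_normalizer {G : Type*} [Group G] {L : Subgroup G} {N : Subgroup ↥L}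
    (hN : N.Normal) : L ≤ Subgroup.normalizer ((N.map L.subtype : Subgroup G) : Set G) := by
  intro g hgL
  rw [Subgroup.mem_normalizer_iff]
  intro y
  constructor
  · rintro ⟨n, hn, rfl⟩
    exact ⟨⟨g, hgL⟩ * n * ⟨g, hgL⟩⁻¹, hN.conj_mem n hn _, rfl⟩
  · rintro ⟨n, hn, hy⟩
    have hc := hN.conj_mem n hn ⟨g, hgL⟩⁻¹
    rw [inv_inv] at hc
    refine ⟨⟨g, hgL⟩⁻¹ * n * ⟨g, hgL⟩, hc, ?_⟩
    have hy' : (n : G) = g * y * g⁻¹ := by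
      rw [← hy]; rfl
    show (g⁻¹ * (n : G) * g) = y
    rw [hy']
    group

lemma aux_uResidual_ne_top {G : Type*} [Group G] [Finite G] (hE : IsEUGroup G) :
    uResidual G ≠ ⊤ := by
  intro hD
  have hSN : ∀ S : Subgroup G, S ≠ ⊥ → Subgroup.normalizer (S : Set G) = S := by
    intro S hS
    rcases hE.2 S hS with hsub | hab
    · obtain ⟨K, -, hKt, hDK⟩ := aux_usubnormal_bound hsub
      rw [hD] at hDK
      exact absurd (top_le_iff.mp hDK) hKt
    · exact aux_uabnormal_selfnorm S hab
  have h1 : Nat.card G ≠ 1 := by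
    intro h
    obtain ⟨hsub, -⟩ := Nat.card_eq_one_iff_unique.mp h
    exact hE.1 (aux_supersolvable_of_isCyclic isCyclic_of_subsingleton)
  have hnpr : ¬ (Nat.card G).Prime := by
    intro h
    haveI : Fact (Nat.card G).Prime := ⟨h⟩
    exact hE.1 (aux_supersolvable_of_isCyclic (isCyclic_of_prime_card rfl))
  have htopmem : (⊤ : Subgroup G) ∈ {L : Subgroup G | Nat.card L ≠ 1 ∧ ¬(Nat.card L).Prime} := by
    constructor <;> rw [Subgroup.card_top] <;> assumption
  obtain ⟨L, hLs, hmin⟩ := Set.Finite.exists_minimalFor (fun L : Subgroup G => Nat.card L)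
    _ (Set.toFinite _) ⟨⊤, htopmem⟩
  have hLpos : 0 < Nat.card L := Nat.card_pos
  have hproper : ∀ S' : Subgroup G, S' ≤ L → S' ≠ L →
      Nat.card S' = 1 ∨ (Nat.card S').Prime := by
    intro S' hle hne
    by_contra hcon
    push_neg at hcon
    have hcard : Nat.card S' ≤ Nat.card L := Nat.le_of_dvd hLpos (Subgroup.card_dvd_of_le hle)
    have heq := hmin ⟨hcon.1, hcon.2⟩ hcard
    exact hne (aux_eq_of_le_card hle heq)
  have hcardeq : ∀ S : Subgroup ↥L, Nat.card (S.map L.subtype) = Nat.card S := by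
    intro S
    exact (Nat.card_congr
      (Subgroup.equivMapOfInjective S L.subtype (Subgroup.subtype_injective L)).toEquiv).symm
  have hmapeq : ∀ S : Subgroup ↥L, S.map L.subtype = L → S = ⊤ := by
    intro S h
    have h2 := congrArg (Subgroup.comap L.subtype) h
    rw [Subgroup.comap_map_eq_self_of_injective (Subgroup.subtype_injective L)] at h2
    exact h2.trans (Subgroup.subgroupOf_self L)
  have hprop : ∀ S : Subgroup ↥L, S ≠ ⊤ → Nat.card S = 1 ∨ (Nat.card S).Prime := by
    intro S hS
    rw [← hcardeq S]
    exact hproper _ (Subgroup.map_subtype_le S) (fun h => hS (hmapeq S h))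
  have hsimp : ∀ N : Subgroup ↥L, N.Normal → N = ⊥ ∨ N = ⊤ := by
    intro N hN
    by_contra hcon
    push_neg at hcon
    have hKb : N.map L.subtype ≠ ⊥ := by
      intro h
      exact hcon.1 (Subgroup.map_injective (Subgroup.subtype_injective L)
        (h.trans (Subgroup.map_bot L.subtype).symm))
    have hle := aux_norm_map_le_normalizer hN
    rw [hSN _ hKb] at hle
    exact hcon.2 (hmapeq N (le_antisymm (Subgroup.map_subtype_le N) hle))
  exact aux_counting hsimp hprop hLs.1 hLs.2

theorem statement_2 {G : Type*} [Group G] [Finite G] (hE : IsEUGroup G)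
    (H : Subgroup G) (h1 : uResidual G ⊓ H = ⊥) (h2 : uResidual G ⊔ H = ⊤)
    (hnil : Group.IsNilpotent ↥H) :
    Subgroup.normalizer (H : Set G) = H := by
  rcases eq_or_ne H ⊤ with rfl | hHt
  · exact le_antisymm le_top le_normalizer
  rcases eq_or_ne H ⊥ with rfl | hHb
  · exfalso
    apply aux_uResidual_ne_top hE
    rwa [sup_bot_eq] at h2
  rcases hE.2 H hHb with hsub | hab
  · exfalso
    obtain ⟨K, hHK, hKt, hDK⟩ := aux_usubnormal_bound hsub
    have hts : (⊤ : Subgroup G) ≤ K := by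
      rw [← h2]
      exact sup_le hDK hHK
    exact hKt (top_le_iff.mp hts)
  · exact aux_uabnormal_selfnorm H hab
end

section
/- (Sufficiency in Theorem B.) Let G be a finite soluble group that is not supersoluble, let D = G^𝔘 be its supersoluble residual, and set Φ = Φ(G) ∩ D. Suppose D has a complement H in G which is a Hall subgroup of G, the image HΦ/Φ is a Gaschütz subgroup of G/Φ, |G : DG'| is a prime power, D is nilpotent whenever H is not a cyclic group of prime power order p^n with n > 1, HΦ(G)/Φ(G) is either a Miller–Moreno group or an abelian group of prime power order, and every proper subgroup of G containing D is supersoluble. Then every non-identity subgroup of G containing Φ is either 𝔘-subnormal or 𝔘-abnormal in G. -/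
open Subgroup

section Helpers

variable {G : Type*} [Group G]

lemma my_card_pos [Finite G] (H : Subgroup G) : 0 < Nat.card ↥H := Nat.card_pos

lemma my_eq_of_le_of_card_le [Finite G] {H K : Subgroup G} (h : H ≤ K)
    (hc : Nat.card ↥K ≤ Nat.card ↥H) : H = K := by
  have h1 : (H : Set G) = (K : Set G) := by
    apply Set.eq_of_subset_of_ncard_le h
    rwa [← Nat.card_coe_set_eq, ← Nat.card_coe_set_eq]
  exact SetLike.ext' h1

lemma my_card_lt [Finite G] {H K : Subgroup G} (h : H < K) : Nat.card ↥H < Nat.card ↥K := by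
  rcases lt_or_ge (Nat.card ↥H) (Nat.card ↥K) with h1 | h1
  · exact h1
  · exact absurd (my_eq_of_le_of_card_le h.le h1) h.ne

lemma my_card_subgroupOf {H K : Subgroup G} (h : H ≤ K) :
    Nat.card ↥(H.subgroupOf K) = Nat.card ↥H :=
  Nat.card_congr (Subgroup.subgroupOfEquivOfLe h).toEquiv

lemma my_card_map_subtype (K : Subgroup G) (X : Subgroup ↥K) :
    Nat.card ↥(X.map K.subtype) = Nat.card ↥X :=
  (Nat.card_congr (Subgroup.equivMapOfInjective X K.subtype K.subtype_injective).toEquiv).symm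

/-- card of image under a hom times card of (ker ⊓ H) equals card H. -/
lemma my_card_map_mul {G' : Type*} [Group G'] [Finite G] (f : G →* G') (H : Subgroup G) :
    Nat.card ↥(H.map f) * Nat.card ↥(f.ker ⊓ H : Subgroup G) = Nat.card ↥H := by
  set g := f.comp H.subtype with hg
  have hrange : g.range = H.map f := by
    rw [hg, MonoidHom.range_comp, H.subtype_range]
  have hker : g.ker = (f.ker ⊓ H).subgroupOf H := by
    rw [Subgroup.inf_subgroupOf_right]
    rfl
  have h1 : Nat.card ↥H = Nat.card (↥H ⧸ g.ker) * Nat.card ↥g.ker :=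
    Subgroup.card_eq_card_quotient_mul_card_subgroup g.ker
  have h2 : Nat.card (↥H ⧸ g.ker) = Nat.card ↥(H.map f) := by
    rw [← hrange]; exact Nat.card_congr (QuotientGroup.quotientKerEquivRange g).toEquiv
  have h3 : Nat.card ↥g.ker = Nat.card ↥(f.ker ⊓ H : Subgroup G) := by
    rw [hker]; exact my_card_subgroupOf inf_le_right
  rw [h1, h2, h3]

lemma my_card_sup_mul_card_inf [Finite G] (H N : Subgroup G) [N.Normal] :
    Nat.card ↥(H ⊔ N) * Nat.card ↥(H ⊓ N) = Nat.card ↥H * Nat.card ↥N := by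
  have e := QuotientGroup.quotientInfEquivProdNormalQuotient H N
  have h1 : Nat.card ↥H = Nat.card (↥H ⧸ N.subgroupOf H) * Nat.card ↥(H ⊓ N) := by
    have := Subgroup.card_eq_card_quotient_mul_card_subgroup (N.subgroupOf H)
    rwa [show Nat.card ↥(N.subgroupOf H) = Nat.card ↥(H ⊓ N) by
      rw [← Subgroup.inf_subgroupOf_right N H]
      rw [show N ⊓ H = H ⊓ N from inf_comm N H]
      exact my_card_subgroupOf inf_le_left] at this
  have h2 : Nat.card ↥(H ⊔ N) = Nat.card (↥H ⧸ N.subgroupOf H) * Nat.card ↥N := by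
    have := Subgroup.card_eq_card_quotient_mul_card_subgroup (N.subgroupOf (H ⊔ N))
    rw [show Nat.card ↥(N.subgroupOf (H ⊔ N)) = Nat.card ↥N from my_card_subgroupOf le_sup_right]
      at this
    rwa [show Nat.card (↥(H ⊔ N) ⧸ N.subgroupOf (H ⊔ N)) = Nat.card (↥H ⧸ N.subgroupOf H) from
      (Nat.card_congr e.toEquiv).symm] at this
  rw [h2, h1]; ring

lemma my_relIndex_mul_card [Finite G] {H K : Subgroup G} (h : H ≤ K) :
    H.relIndex K * Nat.card ↥H = Nat.card ↥K := by
  have := Subgroup.index_mul_card (H.subgroupOf K)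
  rw [my_card_subgroupOf h] at this
  simpa [Subgroup.relIndex] using this

end Helpers
section SSClosure

lemma ss_of_surjective {X Z : Type*} [Group X] [Group Z] (f : X →* Z)
    (hf : Function.Surjective f) (h : IsSupersolvableGroup X) : IsSupersolvableGroup Z := by
  obtain ⟨n, c, hn, hmono, hbot, htop, hcyc⟩ := h
  haveI := hn
  haveI : ∀ i, ((c i).map f).Normal := fun i => (hn i).map f hf
  refine ⟨n, fun i => (c i).map f, inferInstance, fun i j hij => Subgroup.map_mono (hmono hij),
    by show (c 0).map f = ⊥; rw [hbot]; exact Subgroup.map_bot f,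
    by show (c (Fin.last n)).map f = ⊤; rw [htop]; exact Subgroup.map_top_of_surjective f hf,
    ?_⟩
  intro i
  set A := c i.castSucc
  set B := c i.succ
  have hN : ((A.map f).subgroupOf (B.map f)).Normal := Subgroup.normal_subgroupOf
  let φ : ↥B →* (↥(B.map f) ⧸ (A.map f).subgroupOf (B.map f)) :=
    (QuotientGroup.mk' _).comp (f.subgroupMap B)
  have hker : A.subgroupOf B ≤ φ.ker := by
    intro x hx
    have hx' : (x : X) ∈ A := hx
    have : (f.subgroupMap B x : Z) ∈ A.map f := ⟨x, hx', rfl⟩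
    simp only [φ, MonoidHom.mem_ker, MonoidHom.coe_comp, Function.comp_apply]
    exact (QuotientGroup.eq_one_iff _).mpr this
  haveI : (A.subgroupOf B).Normal := Subgroup.normal_subgroupOf
  let ψ := QuotientGroup.lift (A.subgroupOf B) φ hker
  have hψ : Function.Surjective ψ := by
    intro z
    obtain ⟨y, rfl⟩ := QuotientGroup.mk'_surjective _ z
    obtain ⟨x, rfl⟩ := f.subgroupMap_surjective B y
    exact ⟨QuotientGroup.mk x, rfl⟩
  exact isCyclic_of_surjective ψ hψ

lemma ss_of_mulEquiv {X Z : Type*} [Group X] [Group Z] (e : X ≃* Z)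
    (h : IsSupersolvableGroup X) : IsSupersolvableGroup Z :=
  ss_of_surjective e.toMonoidHom e.surjective h

lemma ss_subgroup {X : Type*} [Group X] (h : IsSupersolvableGroup X) (S : Subgroup X) :
    IsSupersolvableGroup ↥S := by
  obtain ⟨n, c, hn, hmono, hbot, htop, hcyc⟩ := h
  haveI := hn
  haveI : ∀ i, ((c i).subgroupOf S).Normal := fun i => Subgroup.normal_subgroupOf
  refine ⟨n, fun i => (c i).subgroupOf S, inferInstance,
    fun i j hij => Subgroup.comap_mono (hmono hij),
    by show (c 0).subgroupOf S = ⊥; rw [hbot]; exact Subgroup.bot_subgroupOf S,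
    by show (c (Fin.last n)).subgroupOf S = ⊤; rw [htop]; exact Subgroup.top_subgroupOf S, ?_⟩
  intro i
  set A := c i.castSucc
  set B := c i.succ
  haveI : (A.subgroupOf B).Normal := Subgroup.normal_subgroupOf
  haveI : ((A.subgroupOf S).subgroupOf (B.subgroupOf S)).Normal := Subgroup.normal_subgroupOf
  let j : ↥(B.subgroupOf S) →* ↥B :=
    { toFun := fun x => ⟨x.1.1, x.2⟩
      map_one' := rfl
      map_mul' := fun _ _ => rfl }
  let φ : ↥(B.subgroupOf S) →* (↥B ⧸ A.subgroupOf B) := (QuotientGroup.mk' _).comp j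
  have hkerφ : ∀ x : ↥(B.subgroupOf S), φ x = 1 ↔ x ∈ (A.subgroupOf S).subgroupOf (B.subgroupOf S) :=
    fun x => (QuotientGroup.eq_one_iff (j x)).trans Iff.rfl
  have hker : (A.subgroupOf S).subgroupOf (B.subgroupOf S) ≤ φ.ker := by
    intro x hx; exact (hkerφ x).mpr hx
  let ψ := QuotientGroup.lift _ φ hker
  have hinj : Function.Injective ψ := by
    rw [← MonoidHom.ker_eq_bot_iff]
    rw [eq_bot_iff]
    intro q hq
    obtain ⟨x, rfl⟩ := QuotientGroup.mk'_surjective _ q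
    have : φ x = 1 := hq
    have hx := (hkerφ x).mp this
    have : (QuotientGroup.mk' ((A.subgroupOf S).subgroupOf (B.subgroupOf S))) x = 1 :=
      (QuotientGroup.eq_one_iff _).mpr hx
    simp only [Subgroup.mem_bot]
    exact this
  haveI : IsCyclic (↥B ⧸ A.subgroupOf B) := hcyc i
  have := isCyclic_of_surjective (MonoidHom.ofInjective hinj).symm (MulEquiv.surjective _)
  exact this

lemma ss_trivial {X : Type*} [Group X] (h : Subsingleton X) : IsSupersolvableGroup X := by
  refine ⟨0, fun _ => ⊥, fun _ => inferInstance, monotone_const, rfl, ?_, ?_⟩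
  · show (⊥ : Subgroup X) = ⊤
    exact Subgroup.ext fun x => by simp [Subsingleton.elim x 1]
  · intro i; exact absurd i.2 (by omega)

lemma ss_of_le {X : Type*} [Group X] {S T : Subgroup X} (h : IsSupersolvableGroup ↥T)
    (hle : S ≤ T) : IsSupersolvableGroup ↥S :=
  ss_of_mulEquiv (Subgroup.subgroupOfEquivOfLe hle) (ss_subgroup h (S.subgroupOf T))

lemma ss_map {X Z : Type*} [Group X] [Group Z] {S : Subgroup X} (f : X →* Z)
    (h : IsSupersolvableGroup ↥S) : IsSupersolvableGroup ↥(S.map f) :=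
  ss_of_surjective (f.subgroupMap S) (f.subgroupMap_surjective S) h

end SSClosure
section PrimeNormal

lemma exists_prime_order_normal {X : Type*} [Group X] [Finite X]
    (h : IsSupersolvableGroup X) (hX : Nontrivial X) :
    ∃ (P : Subgroup X) (p : ℕ), p.Prime ∧ P.Normal ∧ Nat.card ↥P = p := by
  obtain ⟨n, c, hn, hmono, hbot, htop, hcyc⟩ := h
  haveI := hn
  have hstep : ∃ i : Fin n, c i.castSucc = ⊥ ∧ c i.succ ≠ ⊥ := by
    by_contra hcon
    push_neg at hcon
    have hall : ∀ j : Fin (n + 1), c j = ⊥ := by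
      intro j
      induction j using Fin.induction with
      | zero => exact hbot
      | succ i ih => exact hcon i ih
    have h2 := hall (Fin.last n)
    rw [htop] at h2
    exact absurd h2.symm bot_ne_top
  have hstep2 : ∃ N : Subgroup X, N.Normal ∧ N ≠ ⊥ ∧ IsCyclic ↥N := by
    obtain ⟨i, hcbot, hcne⟩ := hstep
    refine ⟨c i.succ, hn _, hcne, ?_⟩
    haveI := hcyc i
    have hker : ((c i.castSucc).subgroupOf (c i.succ)) = ⊥ := by
      rw [hcbot]; exact Subgroup.bot_subgroupOf _
    have hinj : Function.Injective (QuotientGroup.mk' ((c i.castSucc).subgroupOf (c i.succ))) := by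
      rw [← MonoidHom.ker_eq_bot_iff, QuotientGroup.ker_mk']; exact hker
    exact isCyclic_of_surjective (MonoidHom.ofInjective hinj).symm (MulEquiv.surjective _)
  obtain ⟨N, hNnorm, hNne, hNcyc⟩ := hstep2
  obtain ⟨g, hg⟩ := IsCyclic.exists_generator (α := ↥N)
  set m := orderOf g with hm
  have hm0 : 0 < m := orderOf_pos g
  have hmne1 : m ≠ 1 := by
    intro h1
    apply hNne
    have hg1 : g = 1 := orderOf_eq_one_iff.mp h1
    rw [eq_bot_iff]
    intro x hx
    obtain ⟨k, hk⟩ := Subgroup.mem_zpowers_iff.mp (hg ⟨x, hx⟩)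
    rw [hg1, one_zpow] at hk
    have hx1 : x = 1 := congrArg Subtype.val hk.symm
    simp [Subgroup.mem_bot, hx1]
  set p := m.minFac with hp
  have hpp : p.Prime := Nat.minFac_prime hmne1
  have hpm : p ∣ m := Nat.minFac_dvd m
  set hh : ↥N := g ^ (m / p) with hhh
  have horder : orderOf hh = p := by
    rw [hhh, orderOf_pow, ← hm]
    rw [Nat.gcd_comm, Nat.gcd_eq_left (Nat.div_dvd_of_dvd hpm)]
    exact Nat.div_div_self hpm hm0.ne'
  refine ⟨Subgroup.zpowers (hh : X), p, hpp, ?_, ?_⟩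
  · constructor
    intro x hx y
    obtain ⟨k, hk⟩ := Subgroup.mem_zpowers_iff.mp hx
    have hconj : y * x * y⁻¹ = (y * (hh : X) * y⁻¹) ^ k := by
      rw [← hk, conj_zpow]
    set cc := y * (hh : X) * y⁻¹ with hcc
    suffices hc : cc ∈ Subgroup.zpowers (hh : X) by
      rw [hconj]; exact Subgroup.zpow_mem _ hc k
    have hhN : (hh : X) ∈ N := hh.2
    have hcN : cc ∈ N := hNnorm.conj_mem _ hhN y
    obtain ⟨z, hz⟩ := Subgroup.mem_zpowers_iff.mp (hg ⟨cc, hcN⟩)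
    have hcp : (⟨cc, hcN⟩ : ↥N) ^ p = 1 := by
      have h2 := pow_orderOf_eq_one hh
      rw [horder] at h2
      have h1 : (hh : X) ^ p = 1 := by
        have h3 : ((hh ^ p : ↥N) : X) = ((1 : ↥N) : X) := congrArg _ h2
        simpa using h3
      apply Subtype.ext
      show cc ^ p = 1
      rw [hcc, conj_pow, h1]
      group
    have hdvd : (m : ℤ) ∣ z * p := by
      rw [orderOf_dvd_iff_zpow_eq_one, zpow_mul, hz]
      exact_mod_cast hcp
    have hdvd2 : ((m / p : ℕ) : ℤ) ∣ z := by
      obtain ⟨w, hw⟩ := hdvd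
      refine ⟨w, ?_⟩
      have hmp : (m : ℤ) = ((m / p : ℕ) : ℤ) * (p : ℤ) := by
        exact_mod_cast (Nat.div_mul_cancel hpm).symm
      have hpne : (p : ℤ) ≠ 0 := by exact_mod_cast hpp.ne_zero
      have h4 : z * p = ((m / p : ℕ) : ℤ) * w * p := by
        rw [hw, hmp]; ring
      exact mul_right_cancel₀ hpne h4
    obtain ⟨w, hw⟩ := hdvd2
    have h5 : cc = (hh : X) ^ w := by
      have h6 : (⟨cc, hcN⟩ : ↥N) = hh ^ w := by
        rw [hhh, ← hz, hw, ← zpow_natCast g (m / p), ← zpow_mul]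
      have h7 := congrArg (Subgroup.subtype N) h6
      simpa using h7
    rw [h5]
    exact Subgroup.zpow_mem _ (Subgroup.mem_zpowers _) w
  · rw [Nat.card_zpowers, show ((hh : X)) = N.subtype hh from rfl,
      orderOf_injective N.subtype N.subtype_injective hh, horder]

end PrimeNormal
section MaxPrime

universe u

theorem ss_maximal_index_prime_aux (k : ℕ) : ∀ (X : Type u) [Group X] [Finite X],
    Nat.card X ≤ k → IsSupersolvableGroup X → ∀ M : Subgroup X, M ≠ ⊤ →
    (∀ Y : Subgroup X, M ≤ Y → Y = M ∨ Y = ⊤) → M.index.Prime := by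
  induction k with
  | zero => intro X _ _ hcard; exact absurd hcard (by have := Nat.card_pos (α := X); omega)
  | succ k ih =>
    intro X _ _ hcard hss M hMne hmax
    rcases subsingleton_or_nontrivial X with hsub | hnt
    · exact absurd (Subgroup.ext fun x => by simp [Subsingleton.elim x 1, Subgroup.one_mem]) hMne
    obtain ⟨P, p, hpp, hPnorm, hPcard⟩ := exists_prime_order_normal hss hnt
    by_cases hPM : P ≤ M
    · -- quotient case
      set φ := QuotientGroup.mk' P with hφ
      have hcomap : Subgroup.comap φ (M.map φ) = M := by
        rw [Subgroup.comap_map_eq, QuotientGroup.ker_mk']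
        exact sup_eq_left.mpr hPM
      have hM'ne : M.map φ ≠ ⊤ := by
        intro h
        apply hMne
        rw [← hcomap, h, Subgroup.comap_top]
      have hmax' : ∀ Y' : Subgroup (X ⧸ P), M.map φ ≤ Y' → Y' = M.map φ ∨ Y' = ⊤ := by
        intro Y' hY'
        have hMY : M ≤ Subgroup.comap φ Y' := by
          rw [← hcomap]; exact Subgroup.comap_mono hY'
        rcases hmax _ hMY with h | h
        · left
          rw [← Subgroup.map_comap_eq_self_of_surjective (QuotientGroup.mk'_surjective P) Y', h]
        · right
          rw [← Subgroup.map_comap_eq_self_of_surjective (QuotientGroup.mk'_surjective P) Y', h]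
          exact Subgroup.map_top_of_surjective _ (QuotientGroup.mk'_surjective P)
      have hidx : (M.map φ).index = M.index := by
        rw [Subgroup.index_map, hφ, QuotientGroup.ker_mk', sup_eq_left.mpr hPM,
          MonoidHom.range_eq_top.mpr (QuotientGroup.mk'_surjective P), Subgroup.index_top, mul_one]
      have hcardQ : Nat.card (X ⧸ P) ≤ k := by
        have h1 : Nat.card X = Nat.card (X ⧸ P) * Nat.card ↥P :=
          Subgroup.card_eq_card_quotient_mul_card_subgroup P
        have h2 : 0 < Nat.card (X ⧸ P) := Nat.card_pos
        have h3 : 2 ≤ p := hpp.two_le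
        rw [hPcard] at h1
        have h4 : Nat.card (X ⧸ P) * 2 ≤ Nat.card (X ⧸ P) * p := Nat.mul_le_mul_left _ h3
        omega
      have hssQ : IsSupersolvableGroup (X ⧸ P) := ss_of_surjective φ (QuotientGroup.mk'_surjective P) hss
      have := ih (X ⧸ P) hcardQ hssQ (M.map φ) hM'ne hmax'
      rwa [hidx] at this
    · -- complement case
      have hsup : M ⊔ P = ⊤ := by
        rcases hmax (M ⊔ P) le_sup_left with h | h
        · exact absurd (h ▸ le_sup_right) hPM
        · exact h
      have hinfbot : M ⊓ P = ⊥ := by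
        have hdvd : Nat.card ↥(M ⊓ P) ∣ p := hPcard ▸ Subgroup.card_dvd_of_le inf_le_right
        rcases (Nat.Prime.eq_one_or_self_of_dvd hpp _ hdvd) with h | h
        · exact Subgroup.card_eq_one.mp h
        · exfalso
          apply hPM
          have : M ⊓ P = P := my_eq_of_le_of_card_le inf_le_right (by rw [h, hPcard])
          rw [← this]; exact inf_le_left
      have hkey := my_card_sup_mul_card_inf M P
      rw [hsup, hinfbot, Subgroup.card_bot, Subgroup.card_top, mul_one, hPcard] at hkey
      have hidx := Subgroup.index_mul_card M
      have hMpos : 0 < Nat.card ↥M := Nat.card_pos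
      have : M.index = p := by
        have h1 : M.index * Nat.card ↥M = p * Nat.card ↥M := by rw [hidx, hkey]; ring
        exact mul_right_cancel₀ hMpos.ne' h1
      rw [this]; exact hpp

end MaxPrime
section Bridge

variable {G : Type*} [Group G]

/-- transfer of maximality to a quotient by a normal subgroup contained in M -/
lemma maximal_map_quotient {X : Type*} [Group X] (M N : Subgroup X) [N.Normal] (hNM : N ≤ M)
    (hMne : M ≠ ⊤) (hmax : ∀ Y : Subgroup X, M ≤ Y → Y = M ∨ Y = ⊤) :
    (M.map (QuotientGroup.mk' N) ≠ ⊤) ∧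
    (∀ Y' : Subgroup (X ⧸ N), M.map (QuotientGroup.mk' N) ≤ Y' →
      Y' = M.map (QuotientGroup.mk' N) ∨ Y' = ⊤) ∧
    (M.map (QuotientGroup.mk' N)).index = M.index := by
  set φ := QuotientGroup.mk' N with hφ
  have hcomap : Subgroup.comap φ (M.map φ) = M := by
    rw [Subgroup.comap_map_eq, hφ, QuotientGroup.ker_mk']
    exact sup_eq_left.mpr hNM
  refine ⟨?_, ?_, ?_⟩
  · intro h
    apply hMne
    rw [← hcomap, h, Subgroup.comap_top]
  · intro Y' hY'
    have hMY : M ≤ Subgroup.comap φ Y' := by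
      rw [← hcomap]; exact Subgroup.comap_mono hY'
    rcases hmax _ hMY with h | h
    · left
      rw [← Subgroup.map_comap_eq_self_of_surjective (QuotientGroup.mk'_surjective N) Y', h]
    · right
      rw [← Subgroup.map_comap_eq_self_of_surjective (QuotientGroup.mk'_surjective N) Y', h]
      exact Subgroup.map_top_of_surjective _ (QuotientGroup.mk'_surjective N)
  · rw [Subgroup.index_map, hφ, QuotientGroup.ker_mk', sup_eq_left.mpr hNM,
      MonoidHom.range_eq_top.mpr (QuotientGroup.mk'_surjective N), Subgroup.index_top, mul_one]

lemma relIndex_prime_of_maximal_ss [Finite G] {K L : Subgroup G}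
    (hmax : IsMaximalSubgroupOf K L)
    (hss : IsSupersolvableGroup (↥L ⧸ (K.subgroupOf L).normalCore)) :
    (K.relIndex L).Prime := by
  set M := K.subgroupOf L with hM
  have hKL : K ≤ L := hmax.1.le
  have hMne : M ≠ ⊤ := by
    intro h
    have : L ≤ K := by
      intro x hx
      have : (⟨x, hx⟩ : ↥L) ∈ M := h ▸ Subgroup.mem_top _
      exact this
    exact absurd (le_antisymm hKL this) hmax.1.ne
  have hmaxM : ∀ Y : Subgroup ↥L, M ≤ Y → Y = M ∨ Y = ⊤ := by
    intro Y hY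
    have hZle : Y.map L.subtype ≤ L := Subgroup.map_subtype_le Y
    have hKZ : K ≤ Y.map L.subtype := by
      have h1 : M.map L.subtype = K := by
        rw [hM, Subgroup.subgroupOf_map_subtype, inf_eq_left.mpr hKL]
      rw [← h1]
      exact Subgroup.map_mono hY
    have hYeq : (Y.map L.subtype).subgroupOf L = Y :=
      Subgroup.comap_map_eq_self_of_injective L.subtype_injective Y
    rcases hmax.2 _ hKZ hZle with h | h
    · left; rw [← hYeq, h]
    · right; rw [← hYeq, h]; exact Subgroup.subgroupOf_self L
  obtain ⟨h1, h2, h3⟩ := maximal_map_quotient M M.normalCore M.normalCore_le hMne hmaxM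
  have := ss_maximal_index_prime_aux (Nat.card (↥L ⧸ M.normalCore)) (↥L ⧸ M.normalCore)
    le_rfl hss _ h1 h2
  rw [h3] at this
  exact this

end Bridge
section Chains

variable {G : Type*} [Group G]

lemma exists_maximal_step [Finite G] : ∀ (k : ℕ) (A T : Subgroup G), Nat.card ↥T ≤ k →
    A < T → ∃ X, X ≤ T ∧ IsMaximalSubgroupOf A X := by
  intro k
  induction k with
  | zero => intro A T hcard hAT; exact absurd hcard (by have := my_card_pos T; omega)
  | succ k ih =>
    intro A T hcard hAT
    by_cases hm : ∀ Z : Subgroup G, A ≤ Z → Z ≤ T → Z = A ∨ Z = T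
    · exact ⟨T, le_rfl, hAT, hm⟩
    · push_neg at hm
      obtain ⟨Z, hAZ, hZT, hZA, hZT'⟩ := hm
      have hAZ' : A < Z := lt_of_le_of_ne hAZ (Ne.symm hZA)
      have hZT'' : Z < T := lt_of_le_of_ne hZT hZT'
      have hcZ : Nat.card ↥Z ≤ k := by
        have := my_card_lt hZT''
        omega
      obtain ⟨X, hXZ, hX⟩ := ih A Z hcZ hAZ'
      exact ⟨X, le_trans hXZ hZT, hX⟩

lemma usubnormal_prepend {A X : Subgroup G} (hmax : IsMaximalSubgroupOf A X)
    (hss : IsSupersolvableGroup (↥X ⧸ (A.subgroupOf X).normalCore))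
    (h : USubnormal X ∨ X = ⊤) : USubnormal A := by
  have hAne : A ≠ ⊤ := by
    intro h'
    subst h'
    exact absurd hmax.1 not_top_lt
  rcases h with hX | hX
  · obtain ⟨hXne, n, c, h0, hlast, hstep⟩ := hX
    refine ⟨hAne, n + 1, @Fin.cases (n + 1) (fun _ => Subgroup G) A c, rfl, ?_, ?_⟩
    · show @Fin.cases (n + 1) (fun _ => Subgroup G) A c (Fin.last (n + 1)) = ⊤
      have e : Fin.last (n + 1) = Fin.succ (Fin.last n) := rfl
      rw [e]
      exact hlast
    · intro i
      induction i using Fin.cases with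
      | zero =>
        rw [← h0] at hmax hss
        exact ⟨hmax, hss⟩
      | succ j => exact hstep j
  · subst hX
    refine ⟨hAne, 1, @Fin.cases 1 (fun _ => Subgroup G) A (fun _ => ⊤), rfl, rfl, ?_⟩
    intro i
    have hi : i = 0 := Subsingleton.elim i 0
    subst hi
    exact ⟨hmax, hss⟩

lemma step_ss_of_D_le {D : Subgroup G} [D.Normal] (hGD : IsSupersolvableGroup (G ⧸ D))
    {A X : Subgroup G} (hDA : D ≤ A) (hAX : A ≤ X) :
    IsSupersolvableGroup (↥X ⧸ (A.subgroupOf X).normalCore) := by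
  set θ : ↥X →* G ⧸ D := (QuotientGroup.mk' D).comp X.subtype with hθ
  have hker : θ.ker = D.subgroupOf X := by
    ext x
    simp only [hθ, MonoidHom.mem_ker, MonoidHom.coe_comp, Function.comp_apply]
    rw [show (QuotientGroup.mk' D) (X.subtype x) = ((x : G) : G ⧸ D) from rfl]
    rw [QuotientGroup.eq_one_iff]
    rfl
  have hss1 : IsSupersolvableGroup (↥X ⧸ θ.ker) :=
    ss_of_mulEquiv (QuotientGroup.quotientKerEquivRange θ).symm (ss_subgroup hGD θ.range)
  haveI : (D.subgroupOf X).Normal := Subgroup.normal_subgroupOf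
  have hss2 : IsSupersolvableGroup (↥X ⧸ D.subgroupOf X) :=
    ss_of_mulEquiv (QuotientGroup.quotientMulEquivOfEq hker) hss1
  have hle : D.subgroupOf X ≤ (A.subgroupOf X).normalCore := by
    rw [Subgroup.normalCore_eq_iSup]
    have h1 : D.subgroupOf X ≤ A.subgroupOf X := Subgroup.comap_mono hDA
    exact le_iSup_of_le (D.subgroupOf X) (le_iSup_of_le ‹(D.subgroupOf X).Normal›
      (le_iSup_of_le h1 le_rfl))
  have hle' : D.subgroupOf X ≤ (QuotientGroup.mk' (A.subgroupOf X).normalCore).ker := by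
    rw [QuotientGroup.ker_mk']; exact hle
  refine ss_of_surjective (QuotientGroup.lift _ (QuotientGroup.mk' _) hle') ?_ hss2
  intro q
  obtain ⟨x, rfl⟩ := QuotientGroup.mk'_surjective _ q
  exact ⟨QuotientGroup.mk x, rfl⟩

lemma chain2 [Finite G] (D : Subgroup G) [D.Normal] (hGD : IsSupersolvableGroup (G ⧸ D)) :
    ∀ (k : ℕ) (A S : Subgroup G), Nat.card G ≤ k + Nat.card ↥A → A ≤ S → D ≤ S →
    (A < S → IsSupersolvableGroup ↥S) → USubnormal A ∨ A = ⊤ := by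
  intro k
  induction k with
  | zero =>
    intro A S hcard _ _ _
    right
    have h1 : Nat.card ↥(⊤ : Subgroup G) ≤ Nat.card ↥A := by
      rw [Subgroup.card_top]; omega
    exact my_eq_of_le_of_card_le le_top h1
  | succ k ih =>
    intro A S hcard hAS hDS hS
    by_cases hAtop : A = ⊤
    · right; exact hAtop
    have hAlt : A < ⊤ := lt_of_le_of_ne le_top hAtop
    by_cases hASeq : A = S
    · -- D ≤ A case
      subst hASeq
      obtain ⟨X, _, hmaxAX⟩ := exists_maximal_step (Nat.card ↥(⊤ : Subgroup G)) A ⊤ le_rfl hAlt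
      have hssq := step_ss_of_D_le hGD hDS hmaxAX.1.le
      have hbound : Nat.card G ≤ k + Nat.card ↥X := by
        have := my_card_lt hmaxAX.1
        omega
      have hrec := ih X X hbound le_rfl (le_trans hDS hmaxAX.1.le) (fun h => absurd h (lt_irrefl X))
      exact Or.inl (usubnormal_prepend hmaxAX hssq hrec)
    · have hAS' : A < S := lt_of_le_of_ne hAS hASeq
      have ssS := hS hAS'
      obtain ⟨X, hXS, hmaxAX⟩ := exists_maximal_step (Nat.card ↥S) A S le_rfl hAS'
      have hssX : IsSupersolvableGroup ↥X := ss_of_le ssS hXS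
      have hssq : IsSupersolvableGroup (↥X ⧸ (A.subgroupOf X).normalCore) :=
        ss_of_surjective (QuotientGroup.mk' _) (QuotientGroup.mk'_surjective _) hssX
      have hbound : Nat.card G ≤ k + Nat.card ↥X := by
        have := my_card_lt hmaxAX.1
        omega
      have hrec := ih X S hbound hXS hDS (fun _ => ssS)
      exact Or.inl (usubnormal_prepend hmaxAX hssq hrec)

end Chains
section SZAbelian

open Pointwise

private def mkQD {G : Type*} [Group G] (H : Subgroup G) [IsMulCommutative H] [H.FiniteIndex]
    (T : H.LeftTransversal) : H.QuotientDiff :=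
  Quotient.mk'' T

theorem my_sz_abelian {G : Type*} [Group G] [Finite G] {H K1 K2 : Subgroup G}
    [H.Normal] [IsMulCommutative H] (hcop : (Nat.card ↥H).Coprime H.index)
    (h1 : H.IsComplement' K1) (h2 : H.IsComplement' K2) :
    ∃ g : G, K2 = K1.map (MulAut.conj g).toMonoidHom := by
  haveI : H.FiniteIndex := inferInstance
  have key : ∀ K : Subgroup G, H.IsComplement' K →
      ∃ a : H.QuotientDiff, K = MulAction.stabilizer G a := by
    intro K hc
    have hmem : Subgroup.IsComplement (K : Set G) (H : Set G) := by
      exact hc.symm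
    set αK : H.LeftTransversal := ⟨(K : Set G), hmem⟩ with hαK
    refine ⟨mkQD H αK, ?_⟩
    have hsmul : ∀ (g : G) (T : H.LeftTransversal),
        g • mkQD H T = mkQD H (MulOpposite.op g⁻¹ • T) := fun g T => rfl
    have hle : K ≤ MulAction.stabilizer G (mkQD H αK) := by
      intro k hk
      have heq : MulOpposite.op k⁻¹ • αK = αK := by
        apply Subtype.ext
        show MulOpposite.op k⁻¹ • (K : Set G) = (K : Set G)
        ext x
        simp only [Set.mem_smul_set, MulOpposite.smul_eq_mul_unop, MulOpposite.unop_op]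
        constructor
        · rintro ⟨y, hy, rfl⟩
          exact K.mul_mem hy (K.inv_mem hk)
        · intro hx
          exact ⟨x * k, K.mul_mem hx hk, by group⟩
      show k • mkQD H αK = mkQD H αK
      rw [hsmul, heq]
    have hstab := Subgroup.isComplement'_stabilizer_of_coprime
      (α := mkQD H αK) hcop
    have hcard1 := hc.card_mul
    have hcard2 := hstab.card_mul
    have hHpos : 0 < Nat.card ↥H := Nat.card_pos
    have hcardeq : Nat.card ↥(MulAction.stabilizer G (mkQD H αK)) =
        Nat.card ↥K :=
      Nat.eq_of_mul_eq_mul_left hHpos (by rw [hcard1, hcard2])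
    exact my_eq_of_le_of_card_le hle (le_of_eq hcardeq)
  obtain ⟨a1, ha1⟩ := key K1 h1
  obtain ⟨a2, ha2⟩ := key K2 h2
  obtain ⟨h, hh⟩ := Subgroup.exists_smul_eq hcop a1 a2
  refine ⟨(h : G), ?_⟩
  rw [ha2, ha1, ← hh, Subgroup.smul_def, MulAction.stabilizer_smul_eq_stabilizer_map_conj]

end SZAbelian
section SZSolvable

universe u

lemma solvable_commutator_lemma {G : Type*} [Group G] [Group.IsSolvable G] {X : Subgroup G}
    (h : X ≤ ⁅X, X⁆) : X = ⊥ := by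
  obtain ⟨n, hn⟩ := (isSolvable_def G).mp ‹_›
  have key : ∀ m : ℕ, X ≤ derivedSeries G m := by
    intro m
    induction m with
    | zero => exact le_top
    | succ m ih =>
      calc X ≤ ⁅X, X⁆ := h
      _ ≤ ⁅derivedSeries G m, derivedSeries G m⁆ := Subgroup.commutator_mono ih ih
      _ = derivedSeries G (m + 1) := (derivedSeries_succ G m).symm
  exact le_bot_iff.mp (hn ▸ key n)

lemma exists_minimal_normal_le {G : Type*} [Group G] [Finite G] :
    ∀ (k : ℕ) (N : Subgroup G), Nat.card ↥N ≤ k → N.Normal → N ≠ ⊥ →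
    ∃ M : Subgroup G, M.Normal ∧ M ≠ ⊥ ∧ M ≤ N ∧
      (∀ M' : Subgroup G, M'.Normal → M' ≠ ⊥ → M' ≤ M → M' = M) := by
  intro k
  induction k with
  | zero => intro N hc _ _; exact absurd hc (by have := my_card_pos N; omega)
  | succ k ih =>
    intro N hc hNnorm hNbot
    by_cases hmin : ∀ M' : Subgroup G, M'.Normal → M' ≠ ⊥ → M' ≤ N → M' = N
    · exact ⟨N, hNnorm, hNbot, le_rfl, fun M' h1 h2 h3 => hmin M' h1 h2 h3⟩
    · push_neg at hmin
      obtain ⟨M', h1, h2, h3, h4⟩ := hmin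
      have hlt : M' < N := lt_of_le_of_ne h3 h4
      have : Nat.card ↥M' ≤ k := by have := my_card_lt hlt; omega
      obtain ⟨M, hM1, hM2, hM3, hM4⟩ := ih M' this h1 h2
      exact ⟨M, hM1, hM2, le_trans hM3 h3, hM4⟩

theorem my_sz_solvable : ∀ (k : ℕ) (G : Type u) [Group G] [Finite G] [Group.IsSolvable G],
    Nat.card G ≤ k → ∀ (N K1 K2 : Subgroup G) (_ : N.Normal),
    (Nat.card ↥N).Coprime N.index → N.IsComplement' K1 → N.IsComplement' K2 →
    ∃ g : G, K2 = K1.map (MulAut.conj g).toMonoidHom := by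
  intro k
  induction k with
  | zero => intro G _ _ _ hc; exact absurd hc (by have := Nat.card_pos (α := G); omega)
  | succ k ih =>
    intro G _ _ _ hcard N K1 K2 hNnorm hcop h1 h2
    haveI := hNnorm
    by_cases hNbot : N = ⊥
    · subst hNbot
      rw [Subgroup.isComplement'_bot_left] at h1 h2
      refine ⟨1, ?_⟩
      rw [h1, h2]
      exact (Subgroup.map_top_of_surjective _ (MulAut.conj (1 : G)).surjective).symm
    obtain ⟨M, hMnorm, hMbot, hMN, hMmin⟩ :=
      exists_minimal_normal_le (Nat.card ↥N) N le_rfl hNnorm hNbot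
    haveI := hMnorm
    haveI hMcomm : IsMulCommutative M := by
      have hC : ⁅M, M⁆ = ⊥ := by
        rcases eq_or_ne ⁅M, M⁆ ⊥ with h | h
        · exact h
        · have hle : ⁅M, M⁆ ≤ M := Subgroup.commutator_le_left M M
          have heq := hMmin ⁅M, M⁆ (Subgroup.commutator_normal M M) h hle
          exact absurd (solvable_commutator_lemma (le_of_eq heq.symm)) hMbot
      have hcent := Subgroup.commutator_eq_bot_iff_le_centralizer.mp hC
      constructor; constructor
      intro a b
      apply Subtype.ext
      exact (Subgroup.mem_centralizer_iff.mp (hcent a.2) b.1 b.2).symm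
    set φ := QuotientGroup.mk' M with hφ
    have hkerφ : φ.ker = M := QuotientGroup.ker_mk' M
    -- cardinalities
    have hMpos : 0 < Nat.card ↥M := Nat.card_pos
    have hM2 : 2 ≤ Nat.card ↥M := by
      rcases Nat.lt_or_ge (Nat.card ↥M) 2 with h | h
      · exfalso
        have h1 : Nat.card ↥M = 1 := by omega
        exact hMbot (Subgroup.card_eq_one.mp h1)
      · exact h
    have hNpos : 0 < Nat.card ↥N := Nat.card_pos
    have hNK1 := h1.card_mul
    have hNK2 := h2.card_mul
    have hK1idx : Nat.card ↥K1 = N.index := by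
      have hx := Subgroup.index_mul_card N
      exact Nat.eq_of_mul_eq_mul_left hNpos (by rw [hNK1, ← hx]; ring)
    have hK2idx : Nat.card ↥K2 = N.index := by
      have hx := Subgroup.index_mul_card N
      exact Nat.eq_of_mul_eq_mul_left hNpos (by rw [hNK2, ← hx]; ring)
    have hD1 : M ⊓ K1 = ⊥ := by
      have : M ⊓ K1 ≤ N ⊓ K1 := inf_le_inf_right K1 hMN
      rw [h1.disjoint.eq_bot] at this
      exact le_bot_iff.mp this
    have hD2 : M ⊓ K2 = ⊥ := by
      have : M ⊓ K2 ≤ N ⊓ K2 := inf_le_inf_right K2 hMN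
      rw [h2.disjoint.eq_bot] at this
      exact le_bot_iff.mp this
    have hcK1' : Nat.card ↥(K1.map φ) = Nat.card ↥K1 := by
      have := my_card_map_mul φ K1
      rw [hkerφ, hD1, Subgroup.card_bot, mul_one] at this
      exact this
    have hcK2' : Nat.card ↥(K2.map φ) = Nat.card ↥K2 := by
      have := my_card_map_mul φ K2
      rw [hkerφ, hD2, Subgroup.card_bot, mul_one] at this
      exact this
    have hcN' : Nat.card ↥(N.map φ) * Nat.card ↥M = Nat.card ↥N := by
      have := my_card_map_mul φ N
      rw [hkerφ, inf_eq_left.mpr hMN] at this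
      exact this
    have hcQ : Nat.card G = Nat.card (G ⧸ M) * Nat.card ↥M :=
      Subgroup.card_eq_card_quotient_mul_card_subgroup M
    -- complements in quotient
    haveI hN'norm : (N.map φ).Normal := hNnorm.map φ (QuotientGroup.mk'_surjective M)
    have hdvdN' : Nat.card ↥(N.map φ) ∣ Nat.card ↥N := ⟨Nat.card ↥M, hcN'.symm⟩
    have hprod1 : Nat.card ↥(N.map φ) * Nat.card ↥(K1.map φ) = Nat.card (G ⧸ M) := by
      apply Nat.eq_of_mul_eq_mul_right hMpos
      calc Nat.card ↥(N.map φ) * Nat.card ↥(K1.map φ) * Nat.card ↥M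
          = (Nat.card ↥(N.map φ) * Nat.card ↥M) * Nat.card ↥(K1.map φ) := by ring
        _ = Nat.card ↥N * Nat.card ↥K1 := by rw [hcN', hcK1']
        _ = Nat.card G := hNK1
        _ = Nat.card (G ⧸ M) * Nat.card ↥M := hcQ
    have hprod2 : Nat.card ↥(N.map φ) * Nat.card ↥(K2.map φ) = Nat.card (G ⧸ M) := by
      apply Nat.eq_of_mul_eq_mul_right hMpos
      calc Nat.card ↥(N.map φ) * Nat.card ↥(K2.map φ) * Nat.card ↥M
          = (Nat.card ↥(N.map φ) * Nat.card ↥M) * Nat.card ↥(K2.map φ) := by ring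
        _ = Nat.card ↥N * Nat.card ↥K2 := by rw [hcN', hcK2']
        _ = Nat.card G := hNK2
        _ = Nat.card (G ⧸ M) * Nat.card ↥M := hcQ
    have hcop1 : (Nat.card ↥(N.map φ)).Coprime (Nat.card ↥(K1.map φ)) := by
      rw [hcK1', hK1idx]
      exact Nat.Coprime.coprime_dvd_left hdvdN' hcop
    have hcop2 : (Nat.card ↥(N.map φ)).Coprime (Nat.card ↥(K2.map φ)) := by
      rw [hcK2', hK2idx]
      exact Nat.Coprime.coprime_dvd_left hdvdN' hcop
    have hc1' : (N.map φ).IsComplement' (K1.map φ) :=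
      Subgroup.isComplement'_of_coprime hprod1 hcop1
    have hc2' : (N.map φ).IsComplement' (K2.map φ) :=
      Subgroup.isComplement'_of_coprime hprod2 hcop2
    have hcopQ : (Nat.card ↥(N.map φ)).Coprime (N.map φ).index := by
      have := hc1'.index_eq_card
      have h5 := hc1'.card_mul
      have h6 := Subgroup.index_mul_card (N.map φ)
      have hNQpos : 0 < Nat.card ↥(N.map φ) := Nat.card_pos
      have : (N.map φ).index = Nat.card ↥(K1.map φ) :=
        Nat.eq_of_mul_eq_mul_left hNQpos (by rw [h5, ← h6]; ring)
      rw [this]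
      exact hcop1
    have hcardQ : Nat.card (G ⧸ M) ≤ k := by
      have h7 : 0 < Nat.card (G ⧸ M) := Nat.card_pos
      have h8 : Nat.card (G ⧸ M) * 2 ≤ Nat.card (G ⧸ M) * Nat.card ↥M :=
        Nat.mul_le_mul_left _ hM2
      omega
    obtain ⟨gbar, hgbar⟩ := ih (G ⧸ M) hcardQ (N.map φ) (K1.map φ) (K2.map φ)
      hN'norm hcopQ hc1' hc2'
    obtain ⟨g, hg⟩ := QuotientGroup.mk'_surjective M gbar
    have hcomm : ((K1.map φ).map (MulAut.conj gbar).toMonoidHom) =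
        (K1.map (MulAut.conj g).toMonoidHom).map φ := by
      rw [Subgroup.map_map, Subgroup.map_map]
      congr 1
      ext x
      simp only [MonoidHom.comp_apply, MulEquiv.coe_toMonoidHom, MulAut.conj_apply, ← hg]
      rw [map_mul, map_mul, map_inv]
    set K1g := K1.map (MulAut.conj g).toMonoidHom with hK1g
    have hmapeq : K2.map φ = K1g.map φ := by rw [hgbar, hcomm]
    have hT : K2 ⊔ M = K1g ⊔ M := by
      have e2 : Subgroup.comap φ (K2.map φ) = K2 ⊔ M := by
        rw [Subgroup.comap_map_eq, hkerφ]
      have e1 : Subgroup.comap φ (K1g.map φ) = K1g ⊔ M := by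
        rw [Subgroup.comap_map_eq, hkerφ]
      rw [← e2, ← e1, hmapeq]
    set T := K2 ⊔ M with hTdef
    have hK2T : K2 ≤ T := le_sup_left
    have hMT : M ≤ T := le_sup_right
    have hK1gT : K1g ≤ T := by rw [hT]; exact le_sup_left
    have hK1gcard : Nat.card ↥K1g = Nat.card ↥K1 := by
      rw [hK1g]
      exact (Nat.card_congr (Subgroup.equivMapOfInjective K1 _
        (MulAut.conj g).injective).toEquiv).symm
    -- inside T
    haveI : (M.subgroupOf T).Normal := Subgroup.normal_subgroupOf
    haveI : IsMulCommutative (M.subgroupOf T) := by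
      constructor; constructor
      intro a b
      have ha : ((a : ↥T) : G) ∈ M := a.2
      have hb : ((b : ↥T) : G) ∈ M := b.2
      have hc := hMcomm.is_comm.comm (⟨((a : ↥T) : G), ha⟩ : ↥M) ⟨((b : ↥T) : G), hb⟩
      have hc' : ((a : ↥T) : G) * ((b : ↥T) : G) = ((b : ↥T) : G) * ((a : ↥T) : G) :=
        congrArg Subtype.val hc
      apply Subtype.ext
      apply Subtype.ext
      exact hc'
    have hcMT : Nat.card ↥(M.subgroupOf T) = Nat.card ↥M := my_card_subgroupOf hMT
    have hcK2T : Nat.card ↥(K2.subgroupOf T) = Nat.card ↥K2 := my_card_subgroupOf hK2T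
    have hcK1gT : Nat.card ↥(K1g.subgroupOf T) = Nat.card ↥K1g := my_card_subgroupOf hK1gT
    have hcT : Nat.card ↥T = Nat.card ↥K2 * Nat.card ↥M := by
      have h9 := my_card_sup_mul_card_inf K2 M
      rw [show K2 ⊓ M = ⊥ from by rw [inf_comm]; exact hD2,
        Subgroup.card_bot, mul_one] at h9
      exact h9
    have hcopMK2 : (Nat.card ↥M).Coprime (Nat.card ↥K2) := by
      rw [hK2idx]
      exact Nat.Coprime.coprime_dvd_left (Subgroup.card_dvd_of_le hMN) hcop
    have hcT1 : Nat.card ↥(M.subgroupOf T) * Nat.card ↥(K2.subgroupOf T) = Nat.card ↥T := by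
      rw [hcMT, hcK2T, hcT]; ring
    have hcT2 : Nat.card ↥(M.subgroupOf T) * Nat.card ↥(K1g.subgroupOf T) = Nat.card ↥T := by
      rw [hcMT, hcK1gT, hK1gcard, hK1idx, ← hK2idx, hcT]; ring
    have hc1T : (M.subgroupOf T).IsComplement' (K1g.subgroupOf T) :=
      Subgroup.isComplement'_of_coprime hcT2
        (by rw [hcMT, hcK1gT, hK1gcard, hK1idx, ← hK2idx]; exact hcopMK2)
    have hc2T : (M.subgroupOf T).IsComplement' (K2.subgroupOf T) :=
      Subgroup.isComplement'_of_coprime hcT1 (by rw [hcMT, hcK2T]; exact hcopMK2)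
    have hcopT : (Nat.card ↥(M.subgroupOf T)).Coprime (M.subgroupOf T).index := by
      have h6 := Subgroup.index_mul_card (M.subgroupOf T)
      have hMTpos : 0 < Nat.card ↥(M.subgroupOf T) := Nat.card_pos
      have hidxT : (M.subgroupOf T).index = Nat.card ↥K2 := by
        apply Nat.eq_of_mul_eq_mul_right hMTpos
        rw [h6, hcMT, hcT]
      rw [hidxT, hcMT]
      exact hcopMK2
    obtain ⟨t, htt⟩ := my_sz_abelian hcopT hc1T hc2T
    have final : K2 = K1g.map (MulAut.conj (t : G)).toMonoidHom := by
      have h5 := congrArg (Subgroup.map T.subtype) htt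
      rw [Subgroup.subgroupOf_map_subtype, inf_eq_left.mpr hK2T, Subgroup.map_map] at h5
      have hcomp : T.subtype.comp (MulAut.conj t).toMonoidHom =
          ((MulAut.conj (t : G)).toMonoidHom).comp T.subtype := by
        ext x; rfl
      rw [hcomp, ← Subgroup.map_map, Subgroup.subgroupOf_map_subtype,
        inf_eq_left.mpr hK1gT] at h5
      exact h5
    refine ⟨(t : G) * g, ?_⟩
    rw [final, hK1g, Subgroup.map_map]
    congr 1
    ext x
    simp only [MonoidHom.comp_apply, MulEquiv.coe_toMonoidHom, MulAut.conj_apply,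
      mul_inv_rev, mul_assoc]

end SZSolvable
section RelindexTransfer

variable {G : Type*} [Group G]

lemma my_relIndex_map_injective {G' : Type*} [Group G'] [Finite G] [Finite G']
    (f : G →* G') (hf : Function.Injective f) {K L : Subgroup G} (h : K ≤ L) :
    (K.map f).relIndex (L.map f) = K.relIndex L := by
  have h1 := my_relIndex_mul_card (Subgroup.map_mono h (f := f))
  have h2 := my_relIndex_mul_card h
  have hcK : Nat.card ↥(K.map f) = Nat.card ↥K :=
    (Nat.card_congr (Subgroup.equivMapOfInjective K f hf).toEquiv).symm
  have hcL : Nat.card ↥(L.map f) = Nat.card ↥L :=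
    (Nat.card_congr (Subgroup.equivMapOfInjective L f hf).toEquiv).symm
  have hKpos : 0 < Nat.card ↥K := Nat.card_pos
  apply Nat.eq_of_mul_eq_mul_right hKpos
  calc (K.map f).relIndex (L.map f) * Nat.card ↥K
      = (K.map f).relIndex (L.map f) * Nat.card ↥(K.map f) := by rw [hcK]
    _ = Nat.card ↥(L.map f) := h1
    _ = Nat.card ↥L := hcL
    _ = K.relIndex L * Nat.card ↥K := h2.symm

lemma my_relIndex_map_mk' [Finite G] {Φ K L : Subgroup G} [Φ.Normal]
    (hΦK : Φ ≤ K) (hKL : K ≤ L) :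
    (K.map (QuotientGroup.mk' Φ)).relIndex (L.map (QuotientGroup.mk' Φ)) = K.relIndex L := by
  set φ := QuotientGroup.mk' Φ with hφ
  have hker : φ.ker = Φ := QuotientGroup.ker_mk' Φ
  have h1 := my_relIndex_mul_card (Subgroup.map_mono hKL (f := φ))
  have h2 := my_relIndex_mul_card hKL
  have hcK : Nat.card ↥(K.map φ) * Nat.card ↥Φ = Nat.card ↥K := by
    have := my_card_map_mul φ K
    rwa [hker, inf_eq_left.mpr hΦK] at this
  have hcL : Nat.card ↥(L.map φ) * Nat.card ↥Φ = Nat.card ↥L := by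
    have := my_card_map_mul φ L
    rwa [hker, inf_eq_left.mpr (le_trans hΦK hKL)] at this
  have hKpos : 0 < Nat.card ↥K := Nat.card_pos
  apply Nat.eq_of_mul_eq_mul_right hKpos
  calc (K.map φ).relIndex (L.map φ) * Nat.card ↥K
      = (K.map φ).relIndex (L.map φ) * (Nat.card ↥(K.map φ) * Nat.card ↥Φ) := by rw [hcK]
    _ = ((K.map φ).relIndex (L.map φ) * Nat.card ↥(K.map φ)) * Nat.card ↥Φ := by ring
    _ = Nat.card ↥(L.map φ) * Nat.card ↥Φ := by rw [h1]
    _ = Nat.card ↥L := hcL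
    _ = K.relIndex L * Nat.card ↥K := h2.symm

lemma my_conj_comp_mk' {Φ : Subgroup G} [Φ.Normal] (g : G) :
    ∀ X : Subgroup G, (X.map (MulAut.conj g).toMonoidHom).map (QuotientGroup.mk' Φ) =
      (X.map (QuotientGroup.mk' Φ)).map (MulAut.conj ((QuotientGroup.mk' Φ) g)).toMonoidHom := by
  intro X
  have hh : (QuotientGroup.mk' Φ).comp (MulAut.conj g).toMonoidHom
      = ((MulAut.conj ((QuotientGroup.mk' Φ) g)).toMonoidHom).comp (QuotientGroup.mk' Φ) := by
    ext x
    simp only [MonoidHom.comp_apply, MulEquiv.coe_toMonoidHom, MulAut.conj_apply]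
    rw [map_mul, map_mul, map_inv]
  rw [Subgroup.map_map, Subgroup.map_map, hh]

lemma my_conj_inv_cancel {X : Type*} [Group X] (g : X) (S : Subgroup X) :
    (S.map (MulAut.conj g).toMonoidHom).map (MulAut.conj g⁻¹).toMonoidHom = S := by
  rw [Subgroup.map_map]
  have : (MulAut.conj g⁻¹).toMonoidHom.comp (MulAut.conj g).toMonoidHom = MonoidHom.id X := by
    ext x
    show g⁻¹ * (g * x * g⁻¹) * g⁻¹⁻¹ = x
    group
  rw [this, Subgroup.map_id]

end RelindexTransfer

set_option maxHeartbeats 2000000 in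
theorem statement_10 {G : Type*} [Group G] [Finite G] (hsol : IsSolvable G)
    (hns : ¬ IsSupersolvableGroup G) (H : Subgroup G)
    (h1 : uResidual G ⊓ H = ⊥) (h2 : uResidual G ⊔ H = ⊤) (hHall : IsHallSubgroup H)
    (hGas : IsGaschuetzSubgroup (H.map (QuotientGroup.mk' (frattini G ⊓ uResidual G))))
    (hidx : ∃ p k : ℕ, Nat.Prime p ∧ (uResidual G ⊔ commutator G).index = p ^ k)
    (hnil : ¬ (IsCyclic ↥H ∧ ∃ p n : ℕ, Nat.Prime p ∧ 1 < n ∧ Nat.card ↥H = p ^ n) →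
      Group.IsNilpotent ↥(uResidual G))
    (hMM : IsMillerMoreno ↥(H.map (QuotientGroup.mk' (frattini G))) ∨
      IsAbelianOfPrimePowerOrder ↥(H.map (QuotientGroup.mk' (frattini G))))
    (hprop : ∀ E : Subgroup G, uResidual G ≤ E → E ≠ ⊤ → IsSupersolvableGroup ↥E) :
    ∀ A : Subgroup G, A ≠ ⊥ → frattini G ⊓ uResidual G ≤ A →
      USubnormal A ∨ UAbnormal A := by
  haveI : Group.IsSolvable G := hsol
  intro A hAbot hPhiA
  -- basic complement facts
  have hDHsup : H ⊔ uResidual G = ⊤ := by rw [sup_comm]; exact h2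
  have hHDinf : H ⊓ uResidual G = ⊥ := by rw [inf_comm]; exact h1
  have h9 := my_card_sup_mul_card_inf H (uResidual G)
  rw [hDHsup, hHDinf, Subgroup.card_top, Subgroup.card_bot, mul_one] at h9
  -- h9 : card G = card H * card D
  have hDHmul : Nat.card ↥(uResidual G) * Nat.card ↥H = Nat.card G := by rw [h9]; ring
  have hcomp : (uResidual G).IsComplement' H :=
    Subgroup.isComplement'_of_card_mul_and_disjoint hDHmul (disjoint_iff.mpr h1)
  have hHidx : H.index = Nat.card ↥(uResidual G) := hcomp.index_eq_card
  have hcopHD : (Nat.card ↥H).Coprime (Nat.card ↥(uResidual G)) := by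
    have h10 := hHall
    rwa [IsHallSubgroup, hHidx] at h10
  have hDidx : (uResidual G).index = Nat.card ↥H := hcomp.symm.index_eq_card
  have hcopD : (Nat.card ↥(uResidual G)).Coprime ((uResidual G).index) := by
    rw [hDidx]; exact hcopHD.symm
  -- G ⧸ D is supersolvable
  have hssH : IsSupersolvableGroup ↥H := by
    set ψ := (QuotientGroup.mk' (frattini G ⊓ uResidual G)).subgroupMap H with hψ
    have hinjψ : Function.Injective ψ := by
      rw [← MonoidHom.ker_eq_bot_iff, eq_bot_iff]
      intro x hx
      have hx0 : ψ x = 1 := hx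
      have hx1 : (QuotientGroup.mk' (frattini G ⊓ uResidual G)) (x : G) = 1 :=
        congrArg Subtype.val hx0
      have hx2 : (x : G) ∈ frattini G ⊓ uResidual G := (QuotientGroup.eq_one_iff _).mp hx1
      have hx3 : (x : G) ∈ uResidual G ⊓ H := ⟨hx2.2, x.2⟩
      rw [h1] at hx3
      exact Subgroup.mem_bot.mpr (Subtype.ext (Subgroup.mem_bot.mp hx3))
    have hbij : Function.Bijective ψ :=
      ⟨hinjψ, (QuotientGroup.mk' (frattini G ⊓ uResidual G)).subgroupMap_surjective H⟩
    exact ss_of_mulEquiv (MulEquiv.ofBijective ψ hbij).symm hGas.1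
  have hGD : IsSupersolvableGroup (G ⧸ uResidual G) := by
    set θ : ↥H →* G ⧸ uResidual G := (QuotientGroup.mk' (uResidual G)).comp H.subtype with hθ
    have hinj : Function.Injective θ := by
      rw [← MonoidHom.ker_eq_bot_iff, eq_bot_iff]
      intro x hx
      have hx0 : (QuotientGroup.mk' (uResidual G)) (x : G) = 1 := hx
      have hx2 : (x : G) ∈ uResidual G := (QuotientGroup.eq_one_iff _).mp hx0
      have hx3 : (x : G) ∈ uResidual G ⊓ H := ⟨hx2, x.2⟩
      rw [h1] at hx3
      exact Subgroup.mem_bot.mpr (Subtype.ext (Subgroup.mem_bot.mp hx3))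
    have hsurj : Function.Surjective θ := by
      intro q
      obtain ⟨y, rfl⟩ := QuotientGroup.mk'_surjective (uResidual G) q
      have hy : y ∈ ((H ⊔ uResidual G : Subgroup G) : Set G) := by
        rw [hDHsup, Subgroup.coe_top]; exact Set.mem_univ y
      rw [Subgroup.mul_normal] at hy
      obtain ⟨h, hh, d, hd, rfl⟩ := hy
      refine ⟨⟨h, hh⟩, ?_⟩
      show (QuotientGroup.mk' (uResidual G)) h = (QuotientGroup.mk' (uResidual G)) (h * d)
      have hd1 : (QuotientGroup.mk' (uResidual G)) d = 1 := (QuotientGroup.eq_one_iff d).mpr hd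
      rw [map_mul, hd1, mul_one]
    exact ss_of_mulEquiv (MulEquiv.ofBijective θ ⟨hinj, hsurj⟩) hssH
  -- main case analysis
  by_cases hDleA : uResidual G ≤ A
  · by_cases hAtop : A = ⊤
    · right
      intro K L hK hmax
      exfalso
      have hKtop : K = ⊤ := top_le_iff.mp (hAtop ▸ hK)
      rw [hKtop] at hmax
      exact absurd hmax.1 not_top_lt
    · rcases chain2 (uResidual G) hGD (Nat.card G) A A (Nat.le_add_right _ _) le_rfl hDleA
        (fun h => absurd h (lt_irrefl A)) with h | h
      · exact Or.inl h
      · exact absurd h hAtop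
  · by_cases hDA : uResidual G ⊔ A = ⊤
    · -- case 2b : UAbnormal
      right
      intro K L hAK hmax hssq
      have hprime : (K.relIndex L).Prime := relIndex_prime_of_maximal_ss hmax hssq
      have hΦK : frattini G ⊓ uResidual G ≤ K := le_trans hPhiA hAK
      have hKD : K ⊔ uResidual G = ⊤ := by
        rw [eq_top_iff, ← hDA]
        exact sup_le le_sup_right (le_trans hAK le_sup_left)
      have hKDcard := my_card_sup_mul_card_inf K (uResidual G)
      rw [hKD, Subgroup.card_top] at hKDcard
      -- hKDcard : card G * card (K ⊓ D) = card K * card D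
      haveI : ((uResidual G).subgroupOf K).Normal := Subgroup.normal_subgroupOf
      have hcDK : Nat.card ↥((uResidual G).subgroupOf K)
          = Nat.card ↥(K ⊓ uResidual G : Subgroup G) := by
        rw [← Subgroup.inf_subgroupOf_right, show uResidual G ⊓ K = K ⊓ uResidual G from
          inf_comm _ _]
        exact my_card_subgroupOf inf_le_left
      have hDpos : 0 < Nat.card ↥(uResidual G) := Nat.card_pos
      have hsubpos : 0 < Nat.card ↥((uResidual G).subgroupOf K) := Nat.card_pos
      have hKfact : Nat.card ↥H * Nat.card ↥(K ⊓ uResidual G : Subgroup G) = Nat.card ↥K := by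
        apply Nat.eq_of_mul_eq_mul_left hDpos
        calc Nat.card ↥(uResidual G) * (Nat.card ↥H * Nat.card ↥(K ⊓ uResidual G : Subgroup G))
            = (Nat.card ↥(uResidual G) * Nat.card ↥H) *
              Nat.card ↥(K ⊓ uResidual G : Subgroup G) := by ring
          _ = Nat.card G * Nat.card ↥(K ⊓ uResidual G : Subgroup G) := by rw [hDHmul]
          _ = Nat.card ↥K * Nat.card ↥(uResidual G) := hKDcard
          _ = Nat.card ↥(uResidual G) * Nat.card ↥K := by ring
      have hidxDK := Subgroup.index_mul_card ((uResidual G).subgroupOf K)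
      have hidxH : ((uResidual G).subgroupOf K).index = Nat.card ↥H := by
        apply Nat.eq_of_mul_eq_mul_right hsubpos
        rw [hidxDK, hcDK, ← hKfact]
      have hcopK : (Nat.card ↥((uResidual G).subgroupOf K)).Coprime
          ((uResidual G).subgroupOf K).index := by
        rw [hidxH, hcDK]
        exact (Nat.Coprime.coprime_dvd_right
          (Subgroup.card_dvd_of_le inf_le_right) hcopHD).symm
      obtain ⟨B', hB'⟩ := Subgroup.exists_right_complement'_of_coprime hcopK
      have hBK : B'.map K.subtype ≤ K := Subgroup.map_subtype_le B'
      have hcB' := hB'.card_mul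
      have hcB : Nat.card ↥(B'.map K.subtype) = Nat.card ↥H := by
        rw [my_card_map_subtype]
        apply Nat.eq_of_mul_eq_mul_left hsubpos
        rw [hcB', ← hKfact, hcDK]
        ring
      have hBD : uResidual G ⊓ B'.map K.subtype = ⊥ := by
        rw [eq_bot_iff]
        intro x hx
        obtain ⟨hxD, hxB⟩ := hx
        obtain ⟨b', hb', rfl⟩ := Subgroup.mem_map.mp hxB
        have hbD : b' ∈ (uResidual G).subgroupOf K := hxD
        have hmem : b' ∈ (uResidual G).subgroupOf K ⊓ B' := ⟨hbD, hb'⟩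
        rw [hB'.disjoint.eq_bot] at hmem
        have : b' = 1 := Subgroup.mem_bot.mp hmem
        rw [this]
        simp
      have hcompB : (uResidual G).IsComplement' (B'.map K.subtype) :=
        Subgroup.isComplement'_of_card_mul_and_disjoint (by rw [hcB]; exact hDHmul)
          (disjoint_iff.mpr hBD)
      obtain ⟨g, hg⟩ := my_sz_solvable (Nat.card G) G le_rfl (uResidual G) H
        (B'.map K.subtype) inferInstance hcopD hcomp hcompB
      -- Gaschütz contradiction
      have hrel1 : (K.map (QuotientGroup.mk' (frattini G ⊓ uResidual G))).relIndex
          (L.map (QuotientGroup.mk' (frattini G ⊓ uResidual G))) = K.relIndex L :=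
        my_relIndex_map_mk' hΦK hmax.1.le
      set φq := QuotientGroup.mk' (frattini G ⊓ uResidual G) with hφq
      set gb := φq g with hgb
      have hHle : (H.map φq).map (MulAut.conj gb).toMonoidHom ≤ K.map φq := by
        have h10 : (H.map (MulAut.conj g).toMonoidHom).map φq ≤ K.map φq :=
          Subgroup.map_mono (hg ▸ hBK)
        rwa [my_conj_comp_mk' g H] at h10
      have hle1 : H.map φq ≤ (K.map φq).map (MulAut.conj gb⁻¹).toMonoidHom := by
        have h11 := Subgroup.map_mono (f := (MulAut.conj gb⁻¹).toMonoidHom) hHle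
        rwa [my_conj_inv_cancel gb (H.map φq)] at h11
      have hle2 : (K.map φq).map (MulAut.conj gb⁻¹).toMonoidHom ≤
          (L.map φq).map (MulAut.conj gb⁻¹).toMonoidHom :=
        Subgroup.map_mono (Subgroup.map_mono hmax.1.le)
      have hKey := hGas.2 _ _ hle1 hle2
      apply hKey
      have hrel2 : ((K.map φq).map (MulAut.conj gb⁻¹).toMonoidHom).relIndex
          ((L.map φq).map (MulAut.conj gb⁻¹).toMonoidHom) =
          (K.map φq).relIndex (L.map φq) :=
        my_relIndex_map_injective _ (MulAut.conj gb⁻¹).injective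
          (Subgroup.map_mono hmax.1.le)
      rw [hrel2, hrel1]
      exact hprime
    · -- case 2a
      have hSne : A ⊔ uResidual G ≠ ⊤ := by
        intro h
        apply hDA
        rw [sup_comm]
        exact h
      rcases chain2 (uResidual G) hGD (Nat.card G) A (A ⊔ uResidual G) (Nat.le_add_right _ _)
        le_sup_left le_sup_right
        (fun _ => hprop (A ⊔ uResidual G) le_sup_right hSne) with h | h
      · exact Or.inl h
      · exfalso
        apply hDA
        rw [h, sup_top_eq]
end

section
/- (Lemma 2.2, supersoluble case.) Let G be a finite group, M a maximal subgroup of G, and R a minimal normal subgroup of G such that MR = G. Then G/M_G is supersoluble if and only if the semidirect product R ⋊ (G/C_G(R)), formed with respect to the conjugation action of G/C_G(R) on R, is supersoluble. Here M_G denotes the normal core of M in G and C_G(R) the centralizer of R in G. -/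
open Subgroup

instance centralizerNormal {G : Type*} [Group G] (R : Subgroup G) [hR : R.Normal] :
    (Subgroup.centralizer (R : Set G)).Normal := by
  constructor
  intro x hx g
  rw [Subgroup.mem_centralizer_iff] at hx ⊢
  intro h hh
  have hh' : g⁻¹ * h * g ∈ R := by
    have := hR.conj_mem h hh g⁻¹
    simpa [mul_assoc] using this
  have h1 := hx _ hh'
  have h2 := congrArg (fun y => g * y * g⁻¹) h1
  simpa [mul_assoc] using h2

/-- The conjugation action of `G/C_G(R)` on a normal subgroup `R`,
induced by the conjugation homomorphism `G →* MulAut R`. -/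
def conjQuotHom (G : Type*) [Group G] (R : Subgroup G) [R.Normal] :
    (G ⧸ Subgroup.centralizer (R : Set G)) →* MulAut ↥R :=
  QuotientGroup.lift _ MulAut.conjNormal (by
    intro x hx
    rw [Subgroup.mem_centralizer_iff] at hx
    ext r
    have h1 : (r : G) * x = x * r := hx r r.2
    simp [MulAut.conjNormal_apply, ← h1, mul_assoc])

section SS11Aux

theorem SS11.isSupersolvable_of_mulEquiv {G H : Type*} [Group G] [Group H] (e : G ≃* H)
    (hG : IsSupersolvableGroup G) : IsSupersolvableGroup H := by
  obtain ⟨n, c, hnorm, hmono, h0, hl, hcyc⟩ := hG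
  haveI := hnorm
  have hnorm' : ∀ i, ((c i).map (e : G →* H)).Normal := fun i => (hnorm i).map _ e.surjective
  refine ⟨n, fun i => (c i).map (e : G →* H), hnorm',
    fun i j hij => Subgroup.map_mono (hmono hij), ?_, ?_, ?_⟩
  · show Subgroup.map (e : G →* H) (c 0) = ⊥
    rw [h0]; exact Subgroup.map_bot _
  · show Subgroup.map (e : G →* H) (c (Fin.last n)) = ⊤
    rw [hl]; exact Subgroup.map_top_of_surjective _ e.surjective
  · intro i
    have hker : (c i.castSucc).subgroupOf (c i.succ) ≤
        (((c i.castSucc).map (e : G →* H)).subgroupOf ((c i.succ).map (e : G →* H))).comap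
          (e.subgroupMap (c i.succ)).toMonoidHom := by
      intro x hx
      rw [Subgroup.mem_subgroupOf] at hx
      simp only [Subgroup.mem_comap, Subgroup.mem_subgroupOf]
      exact ⟨x, hx, rfl⟩
    refine isCyclic_of_surjective
      (QuotientGroup.map _ _ (e.subgroupMap (c i.succ)).toMonoidHom hker) ?_
    intro y
    obtain ⟨y, rfl⟩ := QuotientGroup.mk'_surjective _ y
    refine ⟨QuotientGroup.mk ((e.subgroupMap (c i.succ)).symm y), ?_⟩
    rw [QuotientGroup.map_mk]
    congr 1
    exact (e.subgroupMap (c i.succ)).apply_symm_apply y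

theorem SS11.isSolvable_of_isSupersolvable {G : Type*} [Group G]
    (hG : IsSupersolvableGroup G) : Group.IsSolvable G := by
  obtain ⟨n, c, hnorm, hmono, h0, hl, hcyc⟩ := hG
  haveI := hnorm
  have key : ∀ i : Fin (n + 1), Group.IsSolvable ↥(c i) := by
    intro i
    induction i using Fin.induction with
    | zero =>
        rw [h0]
        exact isSolvable_of_comm fun a b => Subsingleton.elim _ _
    | succ i ih =>
        have hle : c i.castSucc ≤ c i.succ := hmono (Fin.castSucc_lt_succ (i := i)).le
        haveI : Group.IsSolvable ↥((c i.castSucc).subgroupOf (c i.succ)) :=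
          solvable_of_solvable_injective (f := (Subgroup.subgroupOfEquivOfLe hle).toMonoidHom)
            (Subgroup.subgroupOfEquivOfLe hle).injective (G' := ↥(c i.castSucc))
        haveI : Group.IsSolvable (↥(c i.succ) ⧸ ((c i.castSucc).subgroupOf (c i.succ))) := by
          refine isSolvable_of_comm fun a b => ?_
          obtain ⟨g, hg⟩ := hcyc i
          obtain ⟨k, rfl⟩ := hg a
          obtain ⟨m, rfl⟩ := hg b
          rw [← zpow_add, ← zpow_add, add_comm]
        exact solvable_of_ker_le_range ((c i.castSucc).subgroupOf (c i.succ)).subtype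
          (QuotientGroup.mk' ((c i.castSucc).subgroupOf (c i.succ))) (by
            rw [QuotientGroup.ker_mk', Subgroup.range_subtype])
  have := key (Fin.last n)
  rw [hl] at this
  exact solvable_of_solvable_injective (f := (Subgroup.topEquiv (G := G)).symm.toMonoidHom)
    (Subgroup.topEquiv (G := G)).symm.injective

theorem SS11.not_isSolvable_of_commutator_eq {G : Type*} [Group G] {R : Subgroup G}
    (hne : R ≠ ⊥) (hcomm : ⁅R, R⁆ = R) : ¬ Group.IsSolvable ↥R := by
  have htop : ⁅(⊤ : Subgroup ↥R), (⊤ : Subgroup ↥R)⁆ = ⊤ := by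
    apply Subgroup.map_injective R.subtype_injective
    rw [Subgroup.map_commutator]
    have hmap : Subgroup.map R.subtype ⊤ = R := by
      rw [← MonoidHom.range_eq_map, Subgroup.range_subtype]
    rw [hmap, hcomm]
  intro hs
  obtain ⟨k, hk⟩ := hs.solvable
  have hall : ∀ m, derivedSeries ↥R m = ⊤ := by
    intro m
    induction m with
    | zero => rfl
    | succ m ih => rw [derivedSeries_succ, ih, htop]
  rw [hall k] at hk
  haveI : Nontrivial ↥R := (Subgroup.nontrivial_iff_ne_bot R).mpr hne
  exact top_ne_bot hk

theorem SS11.mem_normalizer_of_commute {G : Type*} [Group G] {H : Subgroup G} {r : G}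
    (hcomm : ∀ h ∈ H, r * h = h * r) : r ∈ Subgroup.normalizer (H : Set G) := by
  rw [Subgroup.mem_normalizer_iff]
  intro h
  constructor
  · intro hh
    have e : r * h * r⁻¹ = h := by rw [hcomm h hh, mul_assoc, mul_inv_cancel, mul_one]
    rw [e]; exact hh
  · intro hh
    have e := hcomm _ hh
    rw [inv_mul_cancel_right] at e
    have := mul_left_cancel e
    rwa [this] at hh

theorem SS11.mem_normalizer_inf {G : Type*} [Group G] {M K : Subgroup G} (hK : K.Normal)
    {m : G} (hm : m ∈ M) : m ∈ Subgroup.normalizer ((K ⊓ M : Subgroup G) : Set G) := by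
  rw [Subgroup.mem_normalizer_iff]
  intro h
  constructor
  · rintro ⟨h1, h2⟩
    exact ⟨hK.conj_mem _ h1 m, M.mul_mem (M.mul_mem hm h2) (M.inv_mem hm)⟩
  · rintro ⟨h1, h2⟩
    have e : m⁻¹ * (m * h * m⁻¹) * m = h := by group
    have c1 : m⁻¹ * (m * h * m⁻¹) * m ∈ K := by
      have := hK.conj_mem _ h1 m⁻¹
      rwa [inv_inv] at this
    have c2 : m⁻¹ * (m * h * m⁻¹) * m ∈ M :=
      M.mul_mem (M.mul_mem (M.inv_mem hm) h2) hm
    rw [e] at c1 c2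
    exact ⟨c1, c2⟩

end SS11Aux

open scoped Pointwise

theorem statement_11 {G : Type*} [Group G] [Finite G] (M R : Subgroup G)
    [R.Normal] (hM : IsMaximalSubgroupOf M ⊤) (hR : IsMinimalNormalSubgroup R)
    (hMR : M ⊔ R = ⊤) :
    IsSupersolvableGroup (G ⧸ M.normalCore) ↔
      IsSupersolvableGroup
        (SemidirectProduct ↥R (G ⧸ Subgroup.centralizer (R : Set G))
          (conjQuotHom G R)) := by
  classical
  have hMne : M ≠ ⊤ := ne_of_lt hM.1
  have hRnotle : ¬ R ≤ M := by
    intro h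
    exact hMne (by rwa [sup_eq_left.mpr h] at hMR)
  have hRbot : R ≠ ⊥ := hR.1
  -- R ⊓ M.normalCore = ⊥
  have hRcore : R ⊓ M.normalCore = ⊥ := by
    by_contra hne
    have heq := hR.2.2 (R ⊓ M.normalCore) inferInstance hne inf_le_left
    refine hRnotle ?_
    have : R ≤ M.normalCore := by rw [← heq]; exact inf_le_right
    exact this.trans (Subgroup.normalCore_le M)
  by_cases hab : ∀ a b : G, a ∈ R → b ∈ R → a * b = b * a
  · -- abelian case: the two groups are isomorphic
    have hRC : R ≤ Subgroup.centralizer (R : Set G) := by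
      intro r hr
      rw [Subgroup.mem_centralizer_iff]
      intro h hh
      exact hab h r hh hr
    -- R ⊓ M = ⊥
    have hRM : R ⊓ M = ⊥ := by
      have hn : (R ⊓ M).Normal := by
        rw [← Subgroup.normalizer_eq_top_iff, eq_top_iff, ← hMR]
        refine sup_le (fun m hm => SS11.mem_normalizer_inf ‹R.Normal› hm)
          (fun r hr => SS11.mem_normalizer_of_commute fun h hh => hab r h hr hh.1)
      by_contra hne
      have heq := hR.2.2 _ hn hne inf_le_left
      refine hRnotle ?_
      rw [← heq]; exact inf_le_right
    -- M.normalCore = M ⊓ C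
    have hMGC : M.normalCore = M ⊓ Subgroup.centralizer (R : Set G) := by
      apply le_antisymm
      · refine le_inf (Subgroup.normalCore_le M) ?_
        intro x hx
        rw [Subgroup.mem_centralizer_iff]
        intro h hh
        have hdisj : Disjoint M.normalCore R := by
          rw [disjoint_iff, inf_comm]
          exact hRcore
        exact (Subgroup.commute_of_normal_of_disjoint _ _ inferInstance inferInstance
          hdisj x h hx hh).symm.eq
      · have hn : (M ⊓ Subgroup.centralizer (R : Set G)).Normal := by
          have := (inf_comm M (Subgroup.centralizer (R : Set G)))
          rw [this, ← Subgroup.normalizer_eq_top_iff, eq_top_iff, ← hMR]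
          refine sup_le (fun m hm => SS11.mem_normalizer_inf (centralizerNormal R) hm)
            (fun r hr => SS11.mem_normalizer_of_commute fun h hh => ?_)
          have := Subgroup.mem_centralizer_iff.mp hh.1 r hr
          exact this
        exact Subgroup.normal_le_normalCore.mpr inf_le_left
    -- complement
    have hmul : (R : Set G) * (M : Set G) = Set.univ := by
      rw [← Subgroup.normal_mul, sup_comm, hMR, Subgroup.coe_top]
    have hcompl : Subgroup.IsComplement' R M :=
      Subgroup.isComplement'_of_disjoint_and_mul_eq_univ (disjoint_iff.mpr hRM) hmul
    -- uniqueness of decompositions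
    have huniq : ∀ (g r m : G), r ∈ R → m ∈ M → g = r * m →
        ((hcompl.equiv g).1 : G) = r ∧ ((hcompl.equiv g).2 : G) = m := by
      intro g r m hr hm hg
      have heq : hcompl.equiv g = (⟨r, hr⟩, ⟨m, hm⟩) := by
        rw [Equiv.apply_eq_iff_eq_symm_apply, Subgroup.IsComplement.equiv_symm_apply]
        exact hg
      rw [heq]
      exact ⟨rfl, rfl⟩
    have hfstmem : ∀ g : G, ((hcompl.equiv g).1 : G) ∈ R := fun g => (hcompl.equiv g).1.2
    have hsndmem : ∀ g : G, ((hcompl.equiv g).2 : G) ∈ M := fun g => (hcompl.equiv g).2.2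
    have hdec : ∀ g : G, ((hcompl.equiv g).1 : G) * ((hcompl.equiv g).2 : G) = g :=
      fun g => hcompl.equiv_fst_mul_equiv_snd g
    -- key multiplicativity of the first component
    have hmm : ∀ a b : G, ((hcompl.equiv (a * b)).1 : G) =
        ((hcompl.equiv a).1 : G) * (a * ((hcompl.equiv b).1 : G) * a⁻¹) := by
      intro a b
      set ra := ((hcompl.equiv a).1 : G)
      set sa := ((hcompl.equiv a).2 : G)
      set rb := ((hcompl.equiv b).1 : G)
      set sb := ((hcompl.equiv b).2 : G)
      have hra : ra ∈ R := hfstmem a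
      have hsa : sa ∈ M := hsndmem a
      have hrb : rb ∈ R := hfstmem b
      have hsb : sb ∈ M := hsndmem b
      have ha : ra * sa = a := hdec a
      have hb : rb * sb = b := hdec b
      have hconj : sa * rb * sa⁻¹ ∈ R := ‹R.Normal›.conj_mem rb hrb sa
      have hdecomp : a * b = (ra * (sa * rb * sa⁻¹)) * (sa * sb) := by
        rw [← ha, ← hb]; group
      have h1 := (huniq (a * b) _ _ (R.mul_mem hra hconj) (M.mul_mem hsa hsb) hdecomp).1
      rw [h1]
      congr 1
      rw [← ha, mul_inv_rev]
      have e1 : ra * sa * rb * (sa⁻¹ * ra⁻¹) = ra * (sa * rb * sa⁻¹) * ra⁻¹ := by group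
      rw [e1, hab _ _ hra hconj, mul_inv_cancel_right]
    -- the homomorphism Φ
    set C := Subgroup.centralizer (R : Set G) with hC
    let Φ : G →* SemidirectProduct ↥R (G ⧸ C) (conjQuotHom G R) :=
      MonoidHom.mk' (fun g =>
        ⟨⟨((hcompl.equiv g).1 : G), hfstmem g⟩, QuotientGroup.mk g⟩) (by
        intro a b
        refine SemidirectProduct.ext ?_ rfl
        show (⟨((hcompl.equiv (a * b)).1 : G), _⟩ : ↥R) =
          ⟨((hcompl.equiv a).1 : G), _⟩ * (conjQuotHom G R (QuotientGroup.mk a))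
            ⟨((hcompl.equiv b).1 : G), _⟩
        have happ : ((conjQuotHom G R (QuotientGroup.mk a))
            (⟨((hcompl.equiv b).1 : G), hfstmem b⟩ : ↥R) : G)
            = a * ((hcompl.equiv b).1 : G) * a⁻¹ := by
          show ((QuotientGroup.lift _ MulAut.conjNormal _ (QuotientGroup.mk a))
            (⟨((hcompl.equiv b).1 : G), hfstmem b⟩ : ↥R) : G) = _
          rfl
        apply Subtype.ext
        rw [Subgroup.coe_mul, happ]
        exact hmm a b)
    have hΦ : ∀ g : G, Φ g =
        ⟨⟨((hcompl.equiv g).1 : G), hfstmem g⟩, QuotientGroup.mk g⟩ := fun g => rfl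
    -- kernel
    have hker : Φ.ker = M.normalCore := by
      rw [hMGC]
      ext x
      simp only [MonoidHom.mem_ker, Subgroup.mem_inf]
      constructor
      · intro hx
        rw [hΦ] at hx
        have h1 : ((hcompl.equiv x).1 : G) = 1 :=
          congrArg (fun z : SemidirectProduct ↥R (G ⧸ C) (conjQuotHom G R) => (z.left : G)) hx
        have h2 : (QuotientGroup.mk x : G ⧸ C) = 1 :=
          congrArg SemidirectProduct.right hx
        have hd := hdec x
        rw [h1, one_mul] at hd
        constructor
        · rw [← hd]; exact hsndmem x
        · exact (QuotientGroup.eq_one_iff x).mp h2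
      · rintro ⟨hxM, hxC⟩
        rw [hΦ]
        have h1 := (huniq x 1 x R.one_mem hxM (one_mul x).symm).1
        refine SemidirectProduct.ext (Subtype.ext h1) ?_
        exact (QuotientGroup.eq_one_iff x).mpr hxC
    -- surjectivity
    have hsurj : Function.Surjective Φ := by
      rintro ⟨r, q⟩
      obtain ⟨g, rfl⟩ := QuotientGroup.mk'_surjective C q
      have hdg := hdec g
      set a := ((hcompl.equiv g).1 : G) with hadef
      set b := ((hcompl.equiv g).2 : G) with hbdef
      have ha : a ∈ R := hfstmem g
      have hb : b ∈ M := hsndmem g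
      refine ⟨(r : G) * b, ?_⟩
      rw [hΦ]
      refine SemidirectProduct.ext
        (Subtype.ext (huniq _ (r : G) b r.2 hb rfl).1) ?_
      show QuotientGroup.mk ((r : G) * b) = QuotientGroup.mk' C g
      rw [QuotientGroup.mk'_apply]
      refine (QuotientGroup.eq).mpr (hRC ?_)
      have e : ((r : G) * b)⁻¹ * g = b⁻¹ * ((r : G)⁻¹ * a) * b⁻¹⁻¹ := by
        rw [← hdg]; group
      rw [e]
      exact Subgroup.Normal.conj_mem ‹R.Normal› _ (R.mul_mem (R.inv_mem r.2) ha) b⁻¹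
    have e1 : (G ⧸ M.normalCore) ≃* SemidirectProduct ↥R (G ⧸ C) (conjQuotHom G R) :=
      (QuotientGroup.quotientMulEquivOfEq hker.symm).trans
        (QuotientGroup.quotientKerEquivOfSurjective Φ hsurj)
    exact ⟨fun h => SS11.isSupersolvable_of_mulEquiv e1 h,
      fun h => SS11.isSupersolvable_of_mulEquiv e1.symm h⟩
  · -- nonabelian case: both sides fail
    have hcomm : ⁅R, R⁆ = R := by
      refine hR.2.2 ⁅R, R⁆ inferInstance ?_ (Subgroup.commutator_le_left R R)
      intro hbot
      apply hab
      intro a b ha hb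
      have hc := Subgroup.commutator_eq_bot_iff_le_centralizer.mp hbot ha
      exact (Subgroup.mem_centralizer_iff.mp hc b hb).symm
    have hnotsolv := SS11.not_isSolvable_of_commutator_eq hRbot hcomm
    constructor
    · intro hss
      exfalso
      haveI := SS11.isSolvable_of_isSupersolvable hss
      have hinj : Function.Injective ((QuotientGroup.mk' M.normalCore).comp R.subtype) := by
        rw [← MonoidHom.ker_eq_bot_iff]
        rw [eq_bot_iff]
        intro x hx
        rw [MonoidHom.mem_ker, MonoidHom.comp_apply, QuotientGroup.mk'_apply,
          QuotientGroup.eq_one_iff] at hx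
        have : (x : G) ∈ R ⊓ M.normalCore := ⟨x.2, hx⟩
        rw [hRcore] at this
        rw [Subgroup.mem_bot]
        exact Subtype.ext this
      exact hnotsolv (solvable_of_solvable_injective hinj)
    · intro hss
      exfalso
      haveI := SS11.isSolvable_of_isSupersolvable hss
      exact hnotsolv (solvable_of_solvable_injective
        (SemidirectProduct.inl_injective (φ := conjQuotHom G R)))
end

section
/- (Lemma 2.9(i).) Let G be a finite group. If every subgroup of G of prime order is either ℙ-subnormal or ℙ-abnormal in G, then G is not a non-abelian simple group. -/
open Subgroup

private lemma aux_card_mul_relindex {G : Type*} [Group G] [Finite G] {A B : Subgroup G}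
    (h : A ≤ B) : Nat.card A * A.relIndex B = Nat.card B := by
  have h1 := Subgroup.card_mul_index (A.subgroupOf B)
  rwa [Nat.card_congr (Subgroup.subgroupOfEquivOfLe h).toEquiv] at h1

private lemma aux_card_comap_zpowers {X : Type*} [Group X] [Finite X] (A : Subgroup X)
    [A.Normal] (y : X ⧸ A) :
    Nat.card ((Subgroup.zpowers y).comap (QuotientGroup.mk' A)) = Nat.card A * orderOf y := by
  set T := (Subgroup.zpowers y).comap (QuotientGroup.mk' A) with hTdef
  have hT : T.index = (Subgroup.zpowers y).index :=
    Subgroup.index_comap_of_surjective _ (QuotientGroup.mk'_surjective A)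
  have h1 : Nat.card T * T.index = Nat.card X := Subgroup.card_mul_index T
  have h2 : Nat.card A * Nat.card (X ⧸ A) = Nat.card X := Subgroup.card_mul_index A
  have h3 : Nat.card (Subgroup.zpowers y) * (Subgroup.zpowers y).index = Nat.card (X ⧸ A) :=
    Subgroup.card_mul_index _
  have hz : Nat.card (Subgroup.zpowers y) = orderOf y := Nat.card_zpowers y
  have hpos : 0 < (Subgroup.zpowers y).index := Nat.pos_of_ne_zero Subgroup.index_ne_zero_of_finite
  apply Nat.eq_of_mul_eq_mul_right hpos
  rw [hT] at h1
  rw [h1, mul_assoc, ← hz, h3, h2]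

private lemma aux_cauchy {X : Type*} [Group X] [Finite X] (p : ℕ) [Fact p.Prime]
    (h : p ∣ Nat.card X) : ∃ x : X, orderOf x = p := by
  letI := Fintype.ofFinite X
  exact exists_prime_orderOf_dvd_card p (by rwa [← Nat.card_eq_fintype_card])

private lemma aux_pgroup_dvd {p : ℕ} [Fact p.Prime] {X : Type*} [Group X] [Finite X]
    (h : IsPGroup p X) [Nontrivial X] : p ∣ Nat.card X := by
  obtain ⟨n, hn⟩ := IsPGroup.iff_card.mp h
  rcases n with - | n
  · rw [pow_zero] at hn
    exact absurd hn Finite.one_lt_card.ne'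
  · rw [hn, pow_succ]
    exact dvd_mul_left p (p ^ n)

theorem statement_16 {G : Type*} [Group G] [Finite G]
    (hyp : ∀ H : Subgroup G, (Nat.card ↥H).Prime → PSubnormal H ∨ PAbnormal H) :
    ¬ (IsSimpleGroup G ∧ ¬ ∀ a b : G, a * b = b * a) := by
  rintro ⟨hsimple, hna⟩
  haveI := hsimple.toNontrivial
  have hcard1 : 1 < Nat.card G := Finite.one_lt_card
  have hN0 : (Nat.card G).primeFactors.Nonempty := by
    rw [Nat.nonempty_primeFactors]; exact hcard1
  set q := (Nat.card G).primeFactors.max' hN0 with hqdef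
  have hqmem : q ∈ (Nat.card G).primeFactors := (Nat.card G).primeFactors.max'_mem hN0
  have hq : q.Prime := Nat.prime_of_mem_primeFactors hqmem
  have hqdvd : q ∣ Nat.card G := Nat.dvd_of_mem_primeFactors hqmem
  have hqmax : ∀ r : ℕ, r.Prime → r ∣ Nat.card G → r ≤ q := fun r hr hrd =>
    Finset.le_max' _ r (Nat.mem_primeFactors.mpr ⟨hr, hrd, Nat.card_pos.ne'⟩)
  haveI : Fact q.Prime := ⟨hq⟩
  clear_value q
  obtain ⟨Q⟩ : Nonempty (Sylow q G) := inferInstance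
  -- q divides the order of Q
  have hqQ : q ∣ Nat.card (Q : Subgroup G) := by
    have hmul := Subgroup.card_mul_index (Q : Subgroup G)
    have := hmul ▸ hqdvd
    rcases (Nat.Prime.dvd_mul hq).mp this with h | h
    · exact h
    · exact absurd h Q.not_dvd_index
  haveI : Nontrivial ↥(Q : Subgroup G) := by
    rw [← Finite.one_lt_card_iff_nontrivial]
    exact lt_of_lt_of_le hq.one_lt (Nat.le_of_dvd Nat.card_pos hqQ)
  -- a central element of Q of order q
  haveI hcenter : Nontrivial (Subgroup.center ↥(Q : Subgroup G)) := Q.2.center_nontrivial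
  have hcdvd : q ∣ Nat.card (Subgroup.center ↥(Q : Subgroup G)) :=
    aux_pgroup_dvd (Q.2.to_subgroup (Subgroup.center ↥(Q : Subgroup G)))
  obtain ⟨u, hu⟩ := aux_cauchy q hcdvd
  have hxord : orderOf (u : ↥(Q : Subgroup G)) = q := by
    have h1 : orderOf ((Subgroup.center ↥(Q : Subgroup G)).subtype u) = orderOf u :=
      orderOf_injective (Subgroup.center ↥(Q : Subgroup G)).subtype
        (Subgroup.subtype_injective _) u
    exact h1.trans hu
  have hxcent : (u : ↥(Q : Subgroup G)) ∈ Subgroup.center ↥(Q : Subgroup G) := u.2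
  set x : ↥(Q : Subgroup G) := (u : ↥(Q : Subgroup G)) with hxdef
  set z : G := (x : G) with hzdef
  have hzord : orderOf z = q := by
    have h1 : orderOf ((Q : Subgroup G).subtype x) = orderOf x :=
      orderOf_injective (Q : Subgroup G).subtype (Subgroup.subtype_injective _) x
    exact h1.trans hxord
  have hzQ : z ∈ (Q : Subgroup G) := x.2
  set H : Subgroup G := Subgroup.zpowers z with hHdef
  have hcardH : Nat.card H = q := by rw [hHdef, Nat.card_zpowers, hzord]
  have hHQ : H ≤ (Q : Subgroup G) := Subgroup.zpowers_le.mpr hzQ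
  have hHcent : H ≤ Subgroup.centralizer ((Q : Subgroup G) : Set G) := by
    apply Subgroup.zpowers_le.mpr
    rw [Subgroup.mem_centralizer_iff]
    intro g hg
    have := Subgroup.mem_center_iff.mp hxcent ⟨g, hg⟩
    exact congrArg Subtype.val this
  rcases hyp H (hcardH ▸ hq) with hsub | habn
  · -- ℙ-subnormal case
    obtain ⟨hne, n, c, hc0, hclast, hstep⟩ := hsub
    obtain ⟨m, rfl⟩ : ∃ m, n = m + 1 := by
      rcases n with - | m
      · exact absurd (hc0 ▸ hclast : H = ⊤) hne
      · exact ⟨m, rfl⟩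
    -- Step 0 : q ^ 2 does not divide |G|
    have hq2 : ¬ (q * q ∣ Nat.card G) := by
      intro hdvd
      set i : Fin (m + 1) := Fin.last m with hidef
      obtain ⟨hMlt, hMpr⟩ := hstep i
      rw [show i.succ = Fin.last (m + 1) from Fin.succ_last m, hclast] at hMlt hMpr
      set M := c i.castSucc with hMdef
      rw [Subgroup.relIndex_top_right] at hMpr
      -- the coset action is faithful
      have hinj : Function.Injective (MulAction.toPermHom G (G ⧸ M)) := by
        rw [← MonoidHom.ker_eq_bot_iff]
        rcases (MonoidHom.normal_ker (MulAction.toPermHom G (G ⧸ M))).eq_bot_or_eq_top with h | h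
        · exact h
        · exfalso
          apply hMlt.ne
          rw [eq_top_iff]
          intro g _
          have hker : g ∈ (MulAction.toPermHom G (G ⧸ M)).ker := h ▸ Subgroup.mem_top g
          have hperm : MulAction.toPermHom G (G ⧸ M) g = 1 := hker
          have hgone : g • ((1 : G) : G ⧸ M) = ((1 : G) : G ⧸ M) := by
            calc g • ((1 : G) : G ⧸ M)
                = (MulAction.toPermHom G (G ⧸ M) g) ((1 : G) : G ⧸ M) := rfl
              _ = ((1 : G) : G ⧸ M) := by rw [hperm]; rfl
          have h2 : ((g * 1 : G) : G ⧸ M) = ((1 : G) : G ⧸ M) := hgone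
          rw [mul_one] at h2
          have := QuotientGroup.eq.mp h2
          simpa using inv_mem_iff.mp (by simpa using this)
      have hdvdfac : Nat.card G ∣ Nat.factorial M.index := by
        have h1 : Nat.card G ∣ Nat.card (Equiv.Perm (G ⧸ M)) :=
          Subgroup.card_dvd_of_injective (MulAction.toPermHom G (G ⧸ M)) hinj
        have h2 : Nat.card (Equiv.Perm (G ⧸ M)) = Nat.factorial M.index := by
          classical
          letI := Fintype.ofFinite (G ⧸ M)
          rw [Nat.card_eq_fintype_card, Fintype.card_perm, ← Nat.card_eq_fintype_card]
          rfl
        rw [← h2]; exact h1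
      have hrq : M.index = q := by
        have h1 : q ≤ M.index :=
          (Nat.Prime.dvd_factorial hq).mp (hqdvd.trans hdvdfac)
        have h2 : M.index ≤ q := hqmax M.index hMpr M.index_dvd_card
        exact le_antisymm h2 h1
      rw [hrq] at hdvdfac
      have hfq : Nat.factorial q = q * Nat.factorial (q - 1) := by
        have h2q := hq.two_le
        conv_lhs => rw [show q = (q - 1) + 1 by omega]
        rw [Nat.factorial_succ]
        congr 1
        omega
      have : q ∣ Nat.factorial (q - 1) := by
        have := hdvd.trans hdvdfac
        rw [hfq] at this
        exact (Nat.mul_dvd_mul_iff_left hq.pos).mp this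
      have h9 := (Nat.Prime.dvd_factorial hq).mp this
      have h8 := hq.two_le
      omega
    -- induction along the chain: H is normalized by every c k
    have key : ∀ k, ∀ hk : k < m + 2,
        H ≤ c ⟨k, hk⟩ ∧ ∀ a ∈ c ⟨k, hk⟩, ∀ h ∈ H, a * h * a⁻¹ ∈ H := by
      intro k
      induction k with
      | zero =>
        intro hk
        have h0 : (⟨0, hk⟩ : Fin (m + 2)) = 0 := rfl
        rw [h0, hc0]
        exact ⟨le_rfl, fun a ha h hh => H.mul_mem (H.mul_mem ha hh) (H.inv_mem ha)⟩
      | succ k ih =>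
        intro hk
        have hk' : k < m + 2 := by omega
        obtain ⟨ihle, ihconj⟩ := ih hk'
        have hkm : k < m + 1 := by omega
        set i : Fin (m + 1) := ⟨k, hkm⟩ with hidef
        obtain ⟨hlt, hprime⟩ := hstep i
        have hcast : i.castSucc = ⟨k, hk'⟩ := rfl
        have hsucc : i.succ = ⟨k + 1, hk⟩ := rfl
        rw [hcast] at hlt hprime
        rw [hsucc] at hlt hprime
        set A := c ⟨k, hk'⟩ with hAdef
        set B := c ⟨k + 1, hk⟩ with hBdef
        have hHA : H ≤ A := ihle
        have hHB : H ≤ B := hHA.trans hlt.le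
        -- H.subgroupOf B is a Sylow q-subgroup of B
        set H' := H.subgroupOf B with hH'def
        have hcardH' : Nat.card H' = q := by
          rw [hH'def, Nat.card_congr (Subgroup.subgroupOfEquivOfLe hHB).toEquiv, hcardH]
        have hBdvdG : Nat.card B ∣ Nat.card G := Subgroup.card_subgroup_dvd_card B
        have hq2B : ¬ (q * q ∣ Nat.card B) := fun hh => hq2 (hh.trans hBdvdG)
        have hqB : q ∣ Nat.card B := by
          have := Subgroup.card_subgroup_dvd_card H'
          rwa [hcardH'] at this
        have hfac : (Nat.card B).factorization q = 1 := by
          have h0 : Nat.card B ≠ 0 := Nat.card_pos.ne'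
          have h1 : 1 ≤ (Nat.card B).factorization q := by
            rw [← Nat.Prime.pow_dvd_iff_le_factorization hq h0, pow_one]
            exact hqB
          have h2 : ¬ 2 ≤ (Nat.card B).factorization q := by
            rw [← Nat.Prime.pow_dvd_iff_le_factorization hq h0, pow_two]
            exact hq2B
          omega
        set P : Sylow q B := Sylow.ofCard H' (by rw [hfac, pow_one]; exact hcardH') with hPdef
        have hPcoe : (P : Subgroup ↥B) = H' := rfl
        -- c k normalizes H', so the number of Sylow q-subgroups divides the prime relindex
        have hA'le : A.subgroupOf B ≤ Subgroup.normalizer ((P : Subgroup ↥B) : Set ↥B) := by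
          intro a haA
          rw [Subgroup.mem_normalizer_iff]
          intro w
          rw [hPcoe, hH'def, Subgroup.mem_subgroupOf, Subgroup.mem_subgroupOf]
          have haA' : (a : G) ∈ A := Subgroup.mem_subgroupOf.mp haA
          constructor
          · intro hw
            have := ihconj (a : G) haA' (w : G) hw
            simpa using this
          · intro hw
            have := ihconj ((a : G)⁻¹) (A.inv_mem haA') _ hw
            simpa [mul_assoc] using this
        have hndvd : Nat.card (Sylow q ↥B) ∣ A.relIndex B := by
          rw [Sylow.card_eq_index_normalizer P]
          exact (Subgroup.index_dvd_of_le hA'le).trans dvd_rfl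
        have hmod : Nat.card (Sylow q ↥B) ≡ 1 [MOD q] := card_sylow_modEq_one q ↥B
        have hsdvdG : A.relIndex B ∣ Nat.card G := by
          have h1 : A.relIndex B ∣ Nat.card B := Dvd.intro_left _ (aux_card_mul_relindex hlt.le)
          exact h1.trans hBdvdG
        have hsq : A.relIndex B ≠ q := by
          intro hh
          apply hq2B
          have hqA : q ∣ Nat.card A := by
            have := Subgroup.card_dvd_of_le hHA
            rwa [hcardH] at this
          have := aux_card_mul_relindex hlt.le
          rw [hh] at this
          rw [← this]
          exact Nat.mul_dvd_mul hqA dvd_rfl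
        have hslt : A.relIndex B < q :=
          lt_of_le_of_ne (hqmax _ hprime hsdvdG) hsq
        have hone : Nat.card (Sylow q ↥B) = 1 := by
          rcases (Nat.Prime.eq_one_or_self_of_dvd hprime _ hndvd) with h | h
          · exact h
          · exfalso
            have hmod' : A.relIndex B % q = 1 % q := h ▸ hmod
            have : 1 % q = 1 := Nat.mod_eq_of_lt hq.one_lt
            rw [this, Nat.mod_eq_of_lt hslt] at hmod'
            exact hprime.one_lt.ne' hmod'
          -- done
        have hnormal : H'.Normal := by
          rw [← hPcoe]
          apply Subgroup.normalizer_eq_top_iff.mp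
          apply Subgroup.index_eq_one.mp
          exact (Sylow.card_eq_index_normalizer P).symm.trans hone
        refine ⟨hHB, ?_⟩
        intro b hb h hh
        have hmem : (⟨h, hHB hh⟩ : ↥B) ∈ H' := Subgroup.mem_subgroupOf.mpr hh
        have := hnormal.conj_mem _ hmem ⟨b, hb⟩
        exact Subgroup.mem_subgroupOf.mp this
    obtain ⟨hle, hconj⟩ := key (m + 1) (by omega)
    have hctop : c ⟨m + 1, by omega⟩ = ⊤ := by
      rw [show (⟨m + 1, by omega⟩ : Fin (m + 2)) = Fin.last (m + 1) from rfl]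
      exact hclast
    rw [hctop] at hconj
    have hHnormal : H.Normal := ⟨fun h hh g => hconj g (Subgroup.mem_top g) h hh⟩
    rcases hHnormal.eq_bot_or_eq_top with h | h
    · rw [h, Subgroup.card_bot] at hcardH
      exact hq.one_lt.ne hcardH
    · exact hne h
  · -- ℙ-abnormal case
    set Nn := Subgroup.normalizer ((Q : Subgroup G) : Set G) with hNndef
    set C' := (Subgroup.centralizer ((Q : Subgroup G) : Set G)).subgroupOf Nn with hC'def
    haveI hC'normal : C'.Normal := by
      rw [hC'def, ← Subgroup.normalizerMonoidHom_ker]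
      exact MonoidHom.normal_ker _
    have hNC : Nn ≤ Subgroup.centralizer ((Q : Subgroup G) : Set G) := by
      by_contra hle
      have hC' : C' ≠ ⊤ := fun hh => hle (Subgroup.subgroupOf_eq_top.mp hh)
      have hqcard : Nat.card (↥Nn ⧸ C') ≠ 1 := by
        intro hh
        exact hC' (Subgroup.index_eq_one.mp hh)
      set t := (Nat.card (↥Nn ⧸ C')).minFac with htdef
      have ht : t.Prime := Nat.minFac_prime hqcard
      haveI : Fact t.Prime := ⟨ht⟩
      obtain ⟨y, hy⟩ := aux_cauchy t (Nat.minFac_dvd _)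
      set T' := (Subgroup.zpowers y).comap (QuotientGroup.mk' C') with hT'def
      have hC'T' : C' ≤ T' := by
        intro a ha
        have h1 : QuotientGroup.mk' C' a = 1 := (QuotientGroup.eq_one_iff a).mpr ha
        rw [hT'def, Subgroup.mem_comap, h1]
        exact Subgroup.one_mem _
      have hcardT' : Nat.card T' = Nat.card C' * t := by
        rw [hT'def, aux_card_comap_zpowers C' y, hy]
      set K := C'.map Nn.subtype with hKdef
      set T := T'.map Nn.subtype with hTdef
      have hKT : K ≤ T := Subgroup.map_mono hC'T'
      have hHK : H ≤ K := by
        rw [hKdef, hC'def, Subgroup.subgroupOf_map_subtype]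
        exact le_inf hHcent (hHQ.trans Subgroup.le_normalizer)
      have hcK : Nat.card K = Nat.card C' :=
        (Nat.card_congr (Subgroup.equivMapOfInjective C' _ (Subgroup.subtype_injective _)).toEquiv).symm
      have hcT : Nat.card T = Nat.card T' :=
        (Nat.card_congr (Subgroup.equivMapOfInjective T' _ (Subgroup.subtype_injective _)).toEquiv).symm
      have hrel : K.relIndex T = t := by
        have h1 := aux_card_mul_relindex hKT
        rw [hcK, hcT, hcardT'] at h1
        exact Nat.eq_of_mul_eq_mul_left Nat.card_pos h1
      exact habn K T hHK hKT (hrel ▸ ht)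
    -- Burnside's normal complement theorem
    have hcomp := MonoidHom.ker_transferSylow_isComplement' Q hNC
    rcases (MonoidHom.normal_ker (MonoidHom.transferSylow Q hNC)).eq_bot_or_eq_top with hk | hk
    · rw [hk] at hcomp
      have hQtop : (Q : Subgroup G) = ⊤ := Subgroup.isComplement'_bot_left.mp hcomp
      have hpG : IsPGroup q G := by
        intro g
        obtain ⟨k, hk2⟩ := Q.2 ⟨g, hQtop ▸ Subgroup.mem_top g⟩
        exact ⟨k, by simpa [Subtype.ext_iff] using hk2⟩
      haveI hcent := hpG.center_nontrivial
      rcases (inferInstance : (Subgroup.center G).Normal).eq_bot_or_eq_top with h | h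
      · rw [h] at hcent
        exact (not_nontrivial _) hcent
      · apply hna
        intro a b
        have := Subgroup.mem_center_iff.mp (h ▸ Subgroup.mem_top a) b
        exact this.symm
    · rw [hk] at hcomp
      have hQbot : (Q : Subgroup G) = ⊥ := Subgroup.isComplement'_top_left.mp hcomp
      rw [hQbot, Subgroup.card_bot] at hqQ
      exact hq.one_lt.ne' (Nat.dvd_one.mp hqQ)
end
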